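/- arXiv:2603.17949 — 7 statements merged into one kernel-verified Lean document; each statement's English description precedes it below -/
import Mathlib

section
/- Assume κ = κ^{<κ} is an infinite cardinal and o is an iterand satisfying the combinatorial clauses. Assume additionally that for every condition p = (tr_p, F_p) ∈ Q_o and every cardinal μ < κ there exists x ∈ |TR_o| with tr_p ≤_{TR_o} x, σ_o(x) > μ · |F_p|, and x ∈ A_{o,q} for every q ∈ F_p. Then the forcing notion Q_o satisfies the κ⁺-chain condition: every antichain of (Q_o, ≤_{Q_o}) (a set of pairwise incompatible conditions, where p, q are incompatible when no condition is ≥_{Q_o} both) has cardinality at most κ. -/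
universe u

open Cardinal

/-- The data of a putative `κ`-trunk controller: a carrier with a binary relation and a
minimum element, a partial "least upper bound" operation `plus` on sequences of elements
indexed by sets of ordinals (with `plusDefined` recording its domain), and a set `S`
together with partial `{0,1}`-valued functions `val x : S → Option Bool`. -/
structure TrunkData (κ : Cardinal.{u}) : Type (u + 1) where
  Carrier : Type u
  le : Carrier → Carrier → Prop
  bot : Carrier
  plusDefined : ∀ s : Set Ordinal.{u}, (s → Carrier) → Prop
  plus : ∀ s : Set Ordinal.{u}, (s → Carrier) → Carrier
  S : Type u
  val : Carrier → S → Option Bool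

/-- `T` is a `κ`-trunk controller. -/
structure IsTrunkController (κ : Cardinal.{u}) (T : TrunkData.{u} κ) : Prop where
  le_refl : ∀ x, T.le x x
  le_trans : ∀ {x y z}, T.le x y → T.le y z → T.le x z
  le_antisymm : ∀ {x y}, T.le x y → T.le y x → x = y
  bot_le : ∀ x, T.le T.bot x
  /-- `plus` is only defined on sequences of length `< κ`. -/
  plusDefined_card_lt : ∀ (s : Set Ordinal.{u}) (f : s → T.Carrier),
    T.plusDefined s f → #s < Cardinal.lift.{u + 1} κ
  /-- whenever defined, the value of `plus` is an upper bound of the terms … -/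
  plus_upperBound : ∀ (s : Set Ordinal.{u}) (f : s → T.Carrier),
    T.plusDefined s f → ∀ i, T.le (f i) (T.plus s f)
  /-- … and is a least upper bound. -/
  plus_least : ∀ (s : Set Ordinal.{u}) (f : s → T.Carrier),
    T.plusDefined s f → ∀ x, (∀ i, T.le (f i) x) → T.le (T.plus s f) x
  /-- axiom (i): every increasing sequence of length `< κ` is in the domain of `plus`. -/
  increasing_plusDefined : ∀ (s : Set Ordinal.{u}) (f : s → T.Carrier),
    #s < Cardinal.lift.{u + 1} κ →
    (∀ i j : s, (i : Ordinal.{u}) ≤ (j : Ordinal.{u}) → T.le (f i) (f j)) →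
    T.plusDefined s f
  /-- axiom (ii): among `κ⁺` many `ζ`-tuples there are two which are pairwise
  in the domain of `plus`. -/
  pairing : ∀ ζ : Ordinal.{u}, ζ < κ.ord →
    ∀ x : Ordinal.{u} → Ordinal.{u} → T.Carrier,
      ∃ α β : Ordinal.{u}, α < β ∧ β < (Order.succ κ).ord ∧
        ∀ ε < ζ, T.plusDefined {α, β} fun γ => x (γ : Ordinal.{u}) ε
  val_mono : ∀ {x y}, T.le x y → ∀ s b, T.val x s = some b → T.val y s = some b

section Product

variable {κ : Cardinal.{u}} {I : Type u}

/-- The support of an element of the `<κ`-support product. -/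
def prodSupport (T : I → TrunkData.{u} κ) (f : (i : I) → Option ((T i).Carrier)) : Set I :=
  {i | f i ≠ none}

/-- Elements of the `<κ`-support product: partial choice functions with support of size `< κ`. -/
def ProdCarrier (T : I → TrunkData.{u} κ) : Type u :=
  { f : (i : I) → Option ((T i).Carrier) // #(prodSupport T f) < κ }

/-- The everywhere-undefined function, i.e. the function with empty domain. -/
def prodBot (T : I → TrunkData.{u} κ) (hκ : ℵ₀ ≤ κ) : ProdCarrier T :=
  ⟨fun _ => none, by
    have h : prodSupport T (fun _ => none) = ∅ := by ext i; simp [prodSupport]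
    rw [h]
    simpa using lt_of_lt_of_le Cardinal.aleph0_pos hκ⟩

/-- Given a sequence `F` of elements of the product and a coordinate `i`, the set of indices
`ε ∈ s` at which `F ε` is defined at `i`. -/
def idxSet (T : I → TrunkData.{u} κ) (s : Set Ordinal.{u}) (F : s → ProdCarrier T)
    (i : I) : Set Ordinal.{u} :=
  {ε | ∃ h : ε ∈ s, ((F ⟨ε, h⟩).1 i).isSome = true}

/-- The sequence of `i`-th coordinates of `F`. -/
noncomputable def idxFun (T : I → TrunkData.{u} κ) (s : Set Ordinal.{u})
    (F : s → ProdCarrier T) (i : I) : idxSet T s F i → (T i).Carrier := fun ε => by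
  have h : ∃ h : (ε : Ordinal.{u}) ∈ s, ((F ⟨ε, h⟩).1 i).isSome = true := ε.2
  exact ((F ⟨(ε : Ordinal.{u}), h.choose⟩).1 i).get h.choose_spec

/-- Definedness of `plus` in the product: the sequence has length `< κ` and at each coordinate
in the union of the supports, the coordinatewise `plus` is defined. -/
def prodPlusDefined (T : I → TrunkData.{u} κ) (s : Set Ordinal.{u})
    (F : s → ProdCarrier T) : Prop :=
  #s < Cardinal.lift.{u + 1} κ ∧ ∀ i : I, (idxSet T s F i).Nonempty →
    (T i).plusDefined (idxSet T s F i) (idxFun T s F i)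

open Classical in
/-- The value of `plus` in the product: computed coordinatewise on the union of the supports. -/
noncomputable def prodPlus (T : I → TrunkData.{u} κ) (hκ : ℵ₀ ≤ κ) (s : Set Ordinal.{u})
    (F : s → ProdCarrier T) : ProdCarrier T :=
  if h : #{i : I | (idxSet T s F i).Nonempty} < κ then
    ⟨fun i => if hi : (idxSet T s F i).Nonempty
        then some ((T i).plus (idxSet T s F i) (idxFun T s F i)) else none, by
      refine lt_of_le_of_lt (Cardinal.mk_le_mk_of_subset ?_) h
      intro i hi
      simp only [Set.mem_setOf_eq]
      by_contra hn
      apply hi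
      show (if hi : (idxSet T s F i).Nonempty
        then some ((T i).plus (idxSet T s F i) (idxFun T s F i)) else none) = none
      exact dif_neg hn⟩
  else prodBot T hκ

/-- The `<κ`-support product `∏^{<κ}_{i ∈ I} T i` of a family of trunk-controller data. -/
noncomputable def prodData (T : I → TrunkData.{u} κ) (hκ : ℵ₀ ≤ κ) : TrunkData.{u} κ where
  Carrier := ProdCarrier T
  le f g := ∀ (i : I) (x : (T i).Carrier), f.1 i = some x →
    ∃ y : (T i).Carrier, g.1 i = some y ∧ (T i).le x y
  bot := prodBot T hκ
  plusDefined := prodPlusDefined T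
  plus := prodPlus T hκ
  S := Σ i : I, (T i).S
  val f p :=
    match f.1 p.1 with
    | none => none
    | some x => (T p.1).val x p.2

end Product

/-- An iterand `o` satisfying the combinatorial clauses: a `κ`-trunk controller `TR`,
an atomic forcing (a quasi-order) `At` with trunk function `tr`, a nondecreasing cardinal
function `σ` with values in `[2, κ]`, sets `A p` of possible trunks of extensions,
and the two demands (F) and (G). -/
structure Iterand (κ : Cardinal.{u}) : Type (u + 1) where
  TR : TrunkData.{u} κ
  isTC : IsTrunkController κ TR
  /-- the atomic forcing `Q_o^at` … -/
  At : Type u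
  /-- … with its quasi-order. -/
  atLE : At → At → Prop
  atLE_refl : ∀ p, atLE p p
  atLE_trans : ∀ {p q r}, atLE p q → atLE q r → atLE p r
  /-- the trunk of an atomic condition. -/
  tr : At → TR.Carrier
  tr_mono : ∀ {p q}, atLE p q → TR.le (tr p) (tr q)
  /-- the function `σ_o : |TR_o| → [2, κ]`. -/
  σ : TR.Carrier → Cardinal.{u}
  two_le_σ : ∀ x, 2 ≤ σ x
  σ_le_kappa : ∀ x, σ x ≤ κ
  σ_mono : ∀ {x y}, TR.le x y → σ x ≤ σ y
  /-- `A p ⊆ {tr q : q ≥ p}` … -/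
  A : At → Set TR.Carrier
  A_sub : ∀ p, ∀ x ∈ A p, ∃ q, atLE p q ∧ tr q = x
  /-- … is upward closed. -/
  A_upward : ∀ p, ∀ x ∈ A p, ∀ y, TR.le x y → y ∈ A p
  /-- clause (F): every `≤`-increasing, `σ`-truly increasing sequence of limit length `< κ`
  has a least upper bound whose trunk is the `plus` of the trunks. -/
  clauseF : ∀ δ : Ordinal.{u}, Order.IsSuccLimit δ → δ < κ.ord →
    ∀ p : Set.Iio δ → At,
      (∀ i j : Set.Iio δ, (i : Ordinal.{u}) ≤ (j : Ordinal.{u}) → atLE (p i) (p j)) →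
      (∀ i j : Set.Iio δ, (i : Ordinal.{u}) < (j : Ordinal.{u}) →
        σ (tr (p i)) < σ (tr (p j)) ∨ (σ (tr (p i)) = κ ∧ σ (tr (p j)) = κ)) →
      ∃ q, (∀ i, atLE (p i) q) ∧ (∀ r, (∀ i, atLE (p i) r) → atLE q r) ∧
        tr q = TR.plus (Set.Iio δ) fun i => tr (p i)
  /-- clause (G): conditions with σ-constant trunks, fewer than `σ` of them, whose trunks
  lie in the domain of `plus`, have a common upper bound whose trunk lies in all the `A`s. -/
  clauseG : ∀ i_star : Ordinal.{u}, 0 < i_star →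
    ∀ p : Set.Iio i_star → At, ∀ c : Cardinal.{u},
      (∀ i, σ (tr (p i)) = c) → i_star < c.ord →
      TR.plusDefined (Set.Iio i_star) (fun i => tr (p i)) →
      ∃ q, (∀ i, atLE (p i) q) ∧ ∀ i, tr q ∈ A (p i)

variable {κ : Cardinal.{u}}

/-- A condition of the derived forcing `Q_o`: a pair `(tr_p, F_p)` with `F_p` a set of atomic
conditions of size `< σ(tr_p)`, all of whose trunks are `≤ tr_p`, with `tr_p ∈ A q` for
`q ∈ F_p`. -/
def IsCond (o : Iterand.{u} κ) (p : o.TR.Carrier × Set o.At) : Prop :=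
  #p.2 < o.σ p.1 ∧ ∀ q ∈ p.2, o.TR.le (o.tr q) p.1 ∧ p.1 ∈ o.A q

/-- The order of the derived forcing `Q_o`. -/
def condLE (o : Iterand.{u} κ) (p q : o.TR.Carrier × Set o.At) : Prop :=
  o.TR.le p.1 q.1 ∧ p.2 ⊆ q.2

namespace IsTrunkController

variable {T : TrunkData.{u} κ}

/-- Among more than `κ` elements of a `κ`-trunk controller, two have a common upper bound:
the pairing axiom for `1`-tuples, applied along an embedding of `κ⁺` into the index type. -/
theorem exists_ne_le_of_lt_mk (hT : IsTrunkController κ T) (hκ : 1 < κ) {ι : Type u}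
    (x : ι → T.Carrier) (hι : κ < #ι) :
    ∃ i j, i ≠ j ∧ ∃ z, T.le (x i) z ∧ T.le (x j) z := by
  have hsucc : lift.{u} #(Set.Iio (Order.succ κ).ord) ≤ lift.{u + 1} #ι := by
    rw [mk_Iio_ordinal, card_ord, lift_lift, lift_le]
    exact Order.succ_le_of_lt hι
  obtain ⟨e⟩ := lift_mk_le'.1 hsucc
  -- the value off `Iio κ⁺.ord` is irrelevant
  let y : Ordinal.{u} → Ordinal.{u} → T.Carrier := fun γ _ =>
    if h : γ < (Order.succ κ).ord then x (e ⟨γ, h⟩) else T.bot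
  have hy {γ} (h : γ < (Order.succ κ).ord) (ε) : y γ ε = x (e ⟨γ, h⟩) := dif_pos h
  have h1 : (1 : Ordinal.{u}) < κ.ord := by rwa [Cardinal.lt_ord, Ordinal.card_one]
  obtain ⟨α, β, hαβ, hβ, hdef⟩ := hT.pairing 1 h1 y
  have hα := hαβ.trans hβ
  have hub := hT.plus_upperBound _ _ (hdef 0 zero_lt_one)
  refine ⟨e ⟨α, hα⟩, e ⟨β, hβ⟩, fun h => hαβ.ne congr(($(e.injective h)).1),
    T.plus {α, β} fun γ => y γ 0, ?_, ?_⟩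
  · simpa only [hy hα] using hub ⟨α, Set.mem_insert _ _⟩
  · simpa only [hy hβ] using hub ⟨β, Set.mem_insert_of_mem _ rfl⟩

end IsTrunkController

variable {o : Iterand.{u} κ} {p q : o.TR.Carrier × Set o.At}

theorem IsCond.of_fst_le (hp : IsCond o p) {t : o.TR.Carrier} (ht : o.TR.le p.1 t) :
    IsCond o (t, p.2) :=
  ⟨hp.1.trans_le (o.σ_mono ht), fun r hr =>
    ⟨o.isTC.le_trans (hp.2 r hr).1 ht, o.A_upward r _ (hp.2 r hr).2 _ ht⟩⟩

theorem IsCond.union {t : o.TR.Carrier} {F G : Set o.At} (hF : IsCond o (t, F))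
    (hG : IsCond o (t, G)) (h : #(F ∪ G : Set o.At) < o.σ t) : IsCond o (t, F ∪ G) :=
  ⟨h, fun r hr => hr.elim (hF.2 r) (hG.2 r)⟩

theorem exists_le_lt_σ
    (hext : ∀ p : o.TR.Carrier × Set o.At, IsCond o p → ∀ μ : Cardinal.{u}, μ < κ →
      ∃ x : o.TR.Carrier, o.TR.le p.1 x ∧ μ * #p.2 < o.σ x)
    (hp : IsCond o p) (hne : p.2.Nonempty) {μ : Cardinal.{u}} (hμ : μ < κ) :
    ∃ x, o.TR.le p.1 x ∧ μ < o.σ x := by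
  obtain ⟨x, hpx, hx⟩ := hext p hp μ hμ
  have hF : 1 ≤ #p.2 := Cardinal.one_le_iff_ne_zero.2 (mk_ne_zero_iff.2 hne.to_subtype)
  exact ⟨x, hpx, (le_mul_of_one_le_right' hF).trans_lt hx⟩

/-- Two conditions whose trunks are bounded are compatible: extend the bound until `σ` exceeds
`|F_p ∪ F_q|`. -/
theorem exists_isCond_condLE_of_le (hκ : ℵ₀ ≤ κ)
    (hext : ∀ p : o.TR.Carrier × Set o.At, IsCond o p → ∀ μ : Cardinal.{u}, μ < κ →
      ∃ x : o.TR.Carrier, o.TR.le p.1 x ∧ μ * #p.2 < o.σ x)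
    (hp : IsCond o p) (hq : IsCond o q) {z : o.TR.Carrier} (hpz : o.TR.le p.1 z)
    (hqz : o.TR.le q.1 z) :
    ∃ r, IsCond o r ∧ condLE o p r ∧ condLE o q r := by
  have hcard : #(p.2 ∪ q.2 : Set o.At) < κ :=
    (mk_union_le _ _).trans_lt <| add_lt_of_lt hκ
      (hp.1.trans_le (o.σ_le_kappa _)) (hq.1.trans_le (o.σ_le_kappa _))
  obtain ⟨y, hzy, hy⟩ : ∃ y, o.TR.le z y ∧ #(p.2 ∪ q.2 : Set o.At) < o.σ y := by
    by_cases hne : (p.2 ∪ q.2).Nonempty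
    · obtain ⟨r, hr, hrz, hrne⟩ : ∃ r, IsCond o r ∧ o.TR.le r.1 z ∧ r.2.Nonempty :=
        (Set.union_nonempty.1 hne).elim (⟨p, hp, hpz, ·⟩) (⟨q, hq, hqz, ·⟩)
      exact exists_le_lt_σ hext (hr.of_fst_le hrz) hrne hcard
    · rw [Set.not_nonempty_iff_eq_empty.1 hne, mk_eq_zero]
      exact ⟨z, o.isTC.le_refl z, two_pos.trans_le (o.two_le_σ z)⟩
  have hpy := o.isTC.le_trans hpz hzy
  have hqy := o.isTC.le_trans hqz hzy
  exact ⟨(y, p.2 ∪ q.2), (hp.of_fst_le hpy).union (hq.of_fst_le hqy) hy,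
    ⟨hpy, Set.subset_union_left⟩, ⟨hqy, Set.subset_union_right⟩⟩

theorem cond_antichain_card_le_general {κ : Cardinal.{u}} (hκinf : ℵ₀ ≤ κ)
    (o : Iterand.{u} κ)
    (hext : ∀ p : o.TR.Carrier × Set o.At, IsCond o p → ∀ μ : Cardinal.{u}, μ < κ →
      ∃ x : o.TR.Carrier, o.TR.le p.1 x ∧ μ * #p.2 < o.σ x ∧ ∀ q ∈ p.2, x ∈ o.A q)
    (S : Set (o.TR.Carrier × Set o.At)) (hS : ∀ p ∈ S, IsCond o p)
    (hanti : ∀ p ∈ S, ∀ q ∈ S, p ≠ q →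
      ¬∃ r : o.TR.Carrier × Set o.At, IsCond o r ∧ condLE o p r ∧ condLE o q r) :
    #S ≤ κ := by
  by_contra! hS_large
  obtain ⟨p, q, hpq, z, hpz, hqz⟩ := o.isTC.exists_ne_le_of_lt_mk
    (one_lt_aleph0.trans_le hκinf) (fun p : S => p.1.1) hS_large
  refine hanti p p.2 q q.2 (Subtype.coe_injective.ne hpq) <|
    exists_isCond_condLE_of_le hκinf (fun r hr μ hμ => ?_) (hS p p.2) (hS q q.2) hpz hqz
  obtain ⟨x, hrx, hx, -⟩ := hext r hr μ hμ
  exact ⟨x, hrx, hx⟩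

/-- Assume `κ = κ^{<κ}` is an infinite cardinal and `o` is an iterand
satisfying the combinatorial clauses.  Assume additionally that every condition
`p = (tr_p, F_p) ∈ Q_o` and every cardinal `μ < κ` admit an `x ∈ |TR_o|` with
`tr_p ≤ x`, `σ(x) > μ · |F_p|` and `x ∈ A q` for every `q ∈ F_p`.  Then `Q_o` satisfies the
`κ⁺`-chain condition: every antichain has cardinality at most `κ`. -/
theorem cond_antichain_card_le {κ : Cardinal.{u}} (hκinf : ℵ₀ ≤ κ) (hκ : κ ^< κ = κ)
    (o : Iterand.{u} κ)
    (hext : ∀ p : o.TR.Carrier × Set o.At, IsCond o p → ∀ μ : Cardinal.{u}, μ < κ →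
      ∃ x : o.TR.Carrier, o.TR.le p.1 x ∧ μ * #p.2 < o.σ x ∧ ∀ q ∈ p.2, x ∈ o.A q)
    (S : Set (o.TR.Carrier × Set o.At)) (hS : ∀ p ∈ S, IsCond o p)
    (hanti : ∀ p ∈ S, ∀ q ∈ S, p ≠ q →
      ¬∃ r : o.TR.Carrier × Set o.At, IsCond o r ∧ condLE o p r ∧ condLE o q r) :
    #S ≤ κ :=
  cond_antichain_card_le_general hκinf o hext S hS hanti
end

section
/- Assume κ = κ^{<κ} is an infinite cardinal and o is an iterand satisfying the combinatorial clauses, such that every element of |TR_o| belongs to H(κ) (is hereditarily of cardinality < κ). Assume additionally that for every condition p = (tr_p, F_p) ∈ Q_o and every cardinal μ < κ there exists x ∈ |TR_o| with tr_p ≤_{TR_o} x, σ_o(x) > μ · |F_p|, and x ∈ A_{o,q} for every q ∈ F_p. Then for every cardinal μ < κ there exists a dense open subset D of (Q_o, ≤_{Q_o}) which can be written as D = ⋃_{ε<κ} Y_ε, where for each ε < κ every subset of Y_ε of cardinality < μ has a common upper bound in Q_o. (D is dense open: every condition has an extension in D, and any extension of a member of D lies in D.) -/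
universe u

open Cardinal

variable {κ : Cardinal.{u}}

/-- A ZFC set is hereditarily of cardinality `< κ`, i.e. it belongs to `H(κ)`. -/
def MemHkappa (κ : Cardinal.{u}) (z : ZFSet.{u}) : Prop :=
  ZFSet.Hereditarily (fun y => #y.toSet < Cardinal.lift.{u + 1} κ) z


/-! Take `D` to be all of `Q_o` and let `Y ε` consist of the conditions whose trunk is the
`ε`-th element of `|TR_o|`: there are at most `κ` trunks, since `|H(κ)| = κ` when
`κ = κ^{<κ}` (an equation which also forces `κ` to be regular). Fewer than `μ` conditions with
a common trunk `x` carry, by regularity, fewer than `κ` atomic conditions in total; extending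
`x` to a trunk `y` whose `σ` exceeds that number gives the common upper bound
`(y, ⋃ F_p)`, because the sets `A q` are upward closed. -/

namespace Cardinal

theorem isRegular_of_powerlt_self (hκ : ℵ₀ ≤ κ) (hpow : κ ^< κ = κ) :
    κ.IsRegular := by
  refine ⟨hκ, not_lt.mp fun hcof => ?_⟩
  exact (lt_power_cof_ord hκ).not_ge ((le_powerlt κ hcof).trans hpow.le)

theorem mk_Iio_le_lift (κ : Cardinal.{u}) : #(Set.Iio κ) ≤ lift.{u + 1} κ := by
  have hord : Function.Injective fun c : Set.Iio κ =>
      (⟨c.1.ord, ord_lt_ord.mpr c.2⟩ : Set.Iio κ.ord) :=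
    fun _ _ h => Subtype.ext (ord_injective (congrArg Subtype.val h))
  simpa only [mk_Iio_ordinal, card_ord] using mk_le_of_injective hord

theorem mk_subset_card_lt_le {α : Type (u + 1)} (hκ : ℵ₀ ≤ κ)
    (hpow : κ ^< κ = κ) {s : Set α} (hs : #s ≤ lift.{u + 1} κ) :
    #{t : Set α // t ⊆ s ∧ #t < lift.{u + 1} κ} ≤ lift.{u + 1} κ := by
  let piece : Set.Iio κ → Set (Set α) := fun d => {t | t ⊆ s ∧ #t ≤ lift.{u + 1} d.1}
  have hcover : {t : Set α | t ⊆ s ∧ #t < lift.{u + 1} κ} ⊆ ⋃ d, piece d := by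
    rintro t ⟨hts, htκ⟩
    obtain ⟨d, hdκ, hd⟩ := lt_lift_iff.mp htκ
    exact Set.mem_iUnion.mpr ⟨⟨d, hdκ⟩, hts, hd.ge⟩
  have hpiece : ∀ d, #(piece d) ≤ lift.{u + 1} κ := fun d =>
    calc #(piece d)
        ≤ max #s ℵ₀ ^ lift.{u + 1} d.1 := mk_bounded_subset_le s _
      _ ≤ lift.{u + 1} κ ^ lift.{u + 1} d.1 :=
          power_le_power_right (max_le hs (aleph0_le_lift.mpr hκ))
      _ = lift.{u + 1} (κ ^ d.1) := (lift_power _ _).symm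
      _ ≤ lift.{u + 1} κ := lift_le.mpr ((le_powerlt κ d.2).trans hpow.le)
  calc #{t : Set α // t ⊆ s ∧ #t < lift.{u + 1} κ}
      ≤ #(⋃ d, piece d) := mk_le_mk_of_subset hcover
    _ ≤ #(Set.Iio κ) * ⨆ d, #(piece d) := mk_iUnion_le _
    _ ≤ lift.{u + 1} κ * lift.{u + 1} κ := mul_le_mul' (mk_Iio_le_lift κ) (ciSup_le' hpiece)
    _ = lift.{u + 1} κ := mul_eq_self (aleph0_le_lift.mpr hκ)

end Cardinal

theorem MemHkappa.rank_lt_ord (hreg : κ.IsRegular) {z : ZFSet.{u}}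
    (hz : MemHkappa κ z) : z.rank < κ.ord := by
  induction z using ZFSet.inductionOn with
  | _ z ih =>
  have hcof : lift.{u} #z < (Ordinal.lift.{u + 1} κ.ord).cof := by
    rw [lift_id'.{u, u + 1}, ← Ordinal.lift_cof, hreg.cof_ord]
    exact hz.self
  refine lt_of_le_of_lt (ZFSet.rank_le_iff.mpr fun y hy => ?_)
    (Ordinal.lift_iSup_add_one_lt_of_lt_cof hcof fun y : z => ih y.1 y.2 (hz.mem y.2))
  exact (Order.lt_add_one_iff.mpr le_rfl).trans_le
    (Ordinal.le_iSup (fun y : z => y.1.rank + 1) ⟨y, hy⟩)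

theorem mk_memHkappa_rank_lt_le (hκ : ℵ₀ ≤ κ) (hpow : κ ^< κ = κ)
    {α : Ordinal.{u}} (hα : α ≤ κ.ord) :
    #{z : ZFSet.{u} | MemHkappa κ z ∧ z.rank < α} ≤ lift.{u + 1} κ := by
  induction α using WellFoundedLT.induction with
  | _ α ih =>
  let S : Ordinal.{u} → Set ZFSet.{u} := fun β => {z | MemHkappa κ z ∧ z.rank < β}
  have hIio : #(Set.Iio α) ≤ lift.{u + 1} κ := by
    simpa using mk_le_mk_of_subset (Set.Iio_subset_Iio hα)
  let piece : Set.Iio α → Set (Set ZFSet.{u}) := fun β =>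
    {t | t ⊆ S β ∧ #t < lift.{u + 1} κ}
  have hcover : (fun z : ZFSet.{u} => z.toSet) '' S α ⊆ ⋃ β, piece β := by
    rintro _ ⟨z, ⟨hz, hzα⟩, rfl⟩
    exact Set.mem_iUnion.mpr
      ⟨⟨z.rank, hzα⟩, fun y hy => ⟨hz.mem hy, ZFSet.rank_lt_of_mem hy⟩, hz.self⟩
  calc #(S α) = #((fun z : ZFSet.{u} => z.toSet) '' S α) :=
        (mk_image_eq SetLike.coe_injective).symm
    _ ≤ #(⋃ β, piece β) := mk_le_mk_of_subset hcover
    _ ≤ #(Set.Iio α) * ⨆ β, #(piece β) := mk_iUnion_le _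
    _ ≤ lift.{u + 1} κ * lift.{u + 1} κ := mul_le_mul' hIio (ciSup_le' fun β =>
        mk_subset_card_lt_le hκ hpow (ih β β.2 (β.2.le.trans hα)))
    _ = lift.{u + 1} κ := mul_eq_self (aleph0_le_lift.mpr hκ)

theorem mk_le_of_injective_memHkappa (hκ : ℵ₀ ≤ κ) (hpow : κ ^< κ = κ)
    {X : Type u} {ι : X → ZFSet.{u}} (hinj : Function.Injective ι)
    (hι : ∀ x, MemHkappa κ (ι x)) : #X ≤ κ := by
  have hreg := isRegular_of_powerlt_self hκ hpow
  have hrange : Set.range ι ⊆ {z | MemHkappa κ z ∧ z.rank < κ.ord} := by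
    rintro _ ⟨x, rfl⟩
    exact ⟨hι x, (hι x).rank_lt_ord hreg⟩
  rw [← lift_le.{u + 1}, ← mk_range_eq_of_injective hinj, lift_id'.{u, u + 1}]
  exact (mk_le_mk_of_subset hrange).trans (mk_memHkappa_rank_lt_le hκ hpow le_rfl)

theorem exists_surjOn_Iio_ord {X : Type u} [Nonempty X] (h : #X ≤ κ) :
    ∃ e : Ordinal.{u} → X, Set.SurjOn e (Set.Iio κ.ord) Set.univ := by
  obtain ⟨f⟩ : Nonempty (X ↪ Set.Iio κ.ord) := lift_mk_le'.mp (by simpa using h)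
  have hinj : Function.Injective fun x => (f x : Ordinal.{u}) :=
    Subtype.val_injective.comp f.injective
  exact ⟨Function.invFun fun x => (f x : Ordinal.{u}),
    fun x _ => ⟨f x, (f x).2, Function.leftInverse_invFun hinj x⟩⟩

section Iterand

variable {o : Iterand.{u} κ}

def CondBounded (o : Iterand.{u} κ) (Z : Set (o.TR.Carrier × Set o.At)) : Prop :=
  ∃ r, IsCond o r ∧ ∀ p ∈ Z, condLE o p r

theorem condBounded_of_le_of_card_lt {x y : o.TR.Carrier} (hxy : o.TR.le x y)
    {Z : Set (o.TR.Carrier × Set o.At)} (hZ : ∀ p ∈ Z, IsCond o p ∧ p.1 = x)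
    (hcard : #(⋃ p ∈ Z, p.2) < o.σ y) : CondBounded o Z := by
  refine ⟨(y, ⋃ p ∈ Z, p.2), ⟨hcard, fun s hs => ?_⟩, fun p hpZ => ?_⟩
  · obtain ⟨p, hpZ, hsp⟩ := Set.mem_iUnion₂.mp hs
    obtain ⟨⟨-, hF⟩, rfl⟩ := hZ p hpZ
    exact ⟨o.isTC.le_trans (hF s hsp).1 hxy, o.A_upward s _ (hF s hsp).2 y hxy⟩
  · obtain ⟨-, rfl⟩ := hZ p hpZ
    exact ⟨hxy, Set.subset_biUnion_of_mem hpZ⟩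

theorem condBounded_of_trunk_eq (hreg : κ.IsRegular)
    (hext : ∀ p : o.TR.Carrier × Set o.At, IsCond o p → ∀ ν : Cardinal.{u}, ν < κ →
      ∃ y : o.TR.Carrier, o.TR.le p.1 y ∧ ν * #p.2 < o.σ y)
    {x : o.TR.Carrier} {Z : Set (o.TR.Carrier × Set o.At)}
    (hZ : ∀ p ∈ Z, IsCond o p ∧ p.1 = x) (hZκ : #Z < κ) : CondBounded o Z := by
  rcases (⋃ p ∈ Z, p.2).eq_empty_or_nonempty with hU | ⟨s, hs⟩
  · refine condBounded_of_le_of_card_lt (o.isTC.le_refl x) hZ ?_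
    rw [hU, mk_eq_zero]
    exact two_pos.trans_le (o.two_le_σ x)
  · obtain ⟨p, hpZ, hsp⟩ := Set.mem_iUnion₂.mp hs
    obtain ⟨hp, rfl⟩ := hZ p hpZ
    have hUκ : #(⋃ q ∈ Z, q.2) < κ :=
      (card_biUnion_lt_iff_forall_of_isRegular hreg hZκ).mpr fun q hq =>
        (hZ q hq).1.1.trans_le (o.σ_le_kappa _)
    obtain ⟨y, hpy, hσ⟩ := hext p hp _ hUκ
    have hF : #p.2 ≠ 0 := mk_ne_zero_iff.mpr ⟨⟨s, hsp⟩⟩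
    exact condBounded_of_le_of_card_lt hpy hZ ((le_mul_right hF).trans_lt hσ)

end Iterand

/-- Assume `κ = κ^{<κ}` is an infinite cardinal and `o` is an iterand
satisfying the combinatorial clauses such that every element of `|TR_o|` belongs to `H(κ)`,
and such that every condition `p ∈ Q_o` and every `μ < κ` admit an `x ≥ tr_p` with
`σ(x) > μ·|F_p|` and `x ∈ A q` for all `q ∈ F_p`.  Then for every cardinal `μ < κ` there is
a dense open subset `D` of `Q_o` which is a union `⋃_{ε<κ} Y ε` of sets such that any
`< μ` members of one `Y ε` have a common upper bound in `Q_o`. -/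
theorem exists_denseOpen_union {κ : Cardinal.{u}} (hκinf : ℵ₀ ≤ κ) (hκ : κ ^< κ = κ)
    (o : Iterand.{u} κ)
    (hH : ∃ ι : o.TR.Carrier → ZFSet.{u}, Function.Injective ι ∧ ∀ x, MemHkappa κ (ι x))
    (hext : ∀ p : o.TR.Carrier × Set o.At, IsCond o p → ∀ μ : Cardinal.{u}, μ < κ →
      ∃ x : o.TR.Carrier, o.TR.le p.1 x ∧ μ * #p.2 < o.σ x ∧ ∀ q ∈ p.2, x ∈ o.A q)
    (μ : Cardinal.{u}) (hμ : μ < κ) :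
    ∃ D : Set (o.TR.Carrier × Set o.At),
      (∀ p ∈ D, IsCond o p) ∧
      (∀ p : o.TR.Carrier × Set o.At, IsCond o p → ∃ q ∈ D, condLE o p q) ∧
      (∀ p ∈ D, ∀ q : o.TR.Carrier × Set o.At, IsCond o q → condLE o p q → q ∈ D) ∧
      ∃ Y : Ordinal.{u} → Set (o.TR.Carrier × Set o.At),
        (D = ⋃ ε ∈ Set.Iio κ.ord, Y ε) ∧
        ∀ ε : Ordinal.{u}, ∀ Z ⊆ Y ε, #Z < μ →
          ∃ r : o.TR.Carrier × Set o.At, IsCond o r ∧ ∀ p ∈ Z, condLE o p r := by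
  obtain ⟨ι, hιinj, hιH⟩ := hH
  have : Nonempty o.TR.Carrier := ⟨o.TR.bot⟩
  obtain ⟨e, he⟩ := exists_surjOn_Iio_ord (mk_le_of_injective_memHkappa hκinf hκ hιinj hιH)
  refine ⟨{p | IsCond o p}, fun p hp => hp, fun p hp => ⟨p, hp, o.isTC.le_refl _, subset_rfl⟩,
    fun _ _ q hq _ => hq, fun ε => {p | IsCond o p ∧ p.1 = e ε}, ?_, ?_⟩
  · ext p
    simp only [Set.mem_ofPred_eq, Set.mem_iUnion, Set.mem_Iio, exists_prop]
    refine ⟨fun hp => ?_, fun ⟨_, _, hp, _⟩ => hp⟩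
    obtain ⟨ε, hε, hεp⟩ := he (Set.mem_univ p.1)
    exact ⟨ε, hε, hp, hεp.symm⟩
  · intro ε Z hZY hZμ
    exact condBounded_of_trunk_eq (isRegular_of_powerlt_self hκinf hκ)
      (fun p hp ν hν => (hext p hp ν hν).imp fun _ h => ⟨h.1, h.2.1⟩)
      (fun p hp => hZY hp) (hZμ.trans hμ)
end

section
/- Assume κ = κ^{<κ} is an infinite cardinal and o is an iterand satisfying the combinatorial clauses. Let δ < κ be a limit ordinal and let p̄ = ⟨p_i : i < δ⟩ be a sequence of conditions of Q_o which is ≤_{Q_o}-increasing and σ_o-truly increasing (i.e. i < j implies σ_o(tr_{p_i}) < σ_o(tr_{p_j}) or σ_o(tr_{p_i}) = σ_o(tr_{p_j}) = κ). Let x_δ := plus_{TR_o}(⟨tr_{p_i} : i < δ⟩) and assume moreover that |⋃_{i<δ} F_{p_i}| < σ_o(x_δ). Then p̄ has a ≤_{Q_o}-least upper bound p_δ in Q_o, namely p_δ = (x_δ, ⋃_{i<δ} F_{p_i}). -/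
universe u

open Cardinal

variable {κ : Cardinal.{u}}

/-!
Axiom (i) of trunk controllers puts the increasing trunks in the domain of `plus`, so `xδ` is
their least upper bound; as the sets `A q` are upward closed, `xδ` remains an admissible trunk
for every atomic condition collected along the sequence.
-/

theorem IsTrunkController.plusDefined_Iio_of_monotone {T : TrunkData.{u} κ}
    (hT : IsTrunkController κ T) {δ : Ordinal.{u}} (hδκ : δ < κ.ord) (f : Set.Iio δ → T.Carrier)
    (hf : ∀ i j : Set.Iio δ, (i : Ordinal.{u}) ≤ (j : Ordinal.{u}) → T.le (f i) (f j)) :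
    T.plusDefined (Set.Iio δ) f := by
  refine hT.increasing_plusDefined _ _ ?_ hf
  rw [Cardinal.mk_Iio_ordinal]
  exact Cardinal.lift_lt.2 (Cardinal.lt_ord.1 hδκ)

section UnionOfConditions

variable (o : Iterand.{u} κ) {ι : Sort*} (p : ι → o.TR.Carrier × Set o.At)
  {x : o.TR.Carrier}

theorem isCond_iUnion (hcond : ∀ i, IsCond o (p i)) (hx : ∀ i, o.TR.le (p i).1 x)
    (hcard : #(⋃ i, (p i).2) < o.σ x) : IsCond o (x, ⋃ i, (p i).2) := by
  refine ⟨hcard, fun q hq => ?_⟩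
  obtain ⟨i, hi⟩ := Set.mem_iUnion.1 hq
  obtain ⟨hq_le, hq_A⟩ := (hcond i).2 q hi
  exact ⟨o.isTC.le_trans hq_le (hx i), o.A_upward q _ hq_A x (hx i)⟩

theorem condLE_iUnion (hx : ∀ i, o.TR.le (p i).1 x) (i : ι) :
    condLE o (p i) (x, ⋃ i, (p i).2) :=
  ⟨hx i, Set.subset_iUnion (fun i => (p i).2) i⟩

theorem iUnion_condLE {r : o.TR.Carrier × Set o.At} (hx : o.TR.le x r.1)
    (hr : ∀ i, condLE o (p i) r) : condLE o (x, ⋃ i, (p i).2) r :=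
  ⟨hx, Set.iUnion_subset fun i => (hr i).2⟩

end UnionOfConditions

theorem trulyIncreasing_lub_general {κ : Cardinal.{u}}
    (o : Iterand.{u} κ) (δ : Ordinal.{u}) (hδκ : δ < κ.ord)
    (p : Set.Iio δ → o.TR.Carrier × Set o.At)
    (hcond : ∀ i, IsCond o (p i))
    (hinc : ∀ i j : Set.Iio δ, (i : Ordinal.{u}) ≤ (j : Ordinal.{u}) →
      condLE o (p i) (p j))
    (xδ : o.TR.Carrier) (hxδ : xδ = o.TR.plus (Set.Iio δ) fun i => (p i).1)
    (hF : #(⋃ i, (p i).2) < o.σ xδ) :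
    IsCond o (xδ, ⋃ i, (p i).2) ∧
    (∀ i, condLE o (p i) (xδ, ⋃ i, (p i).2)) ∧
    ∀ r : o.TR.Carrier × Set o.At, IsCond o r → (∀ i, condLE o (p i) r) →
      condLE o (xδ, ⋃ i, (p i).2) r := by
  have hdef : o.TR.plusDefined (Set.Iio δ) fun i => (p i).1 :=
    o.isTC.plusDefined_Iio_of_monotone hδκ _ fun i j hij => (hinc i j hij).1
  have hub : ∀ i, o.TR.le (p i).1 xδ := hxδ ▸ o.isTC.plus_upperBound _ _ hdef
  have hleast : ∀ r : o.TR.Carrier × Set o.At, (∀ i, condLE o (p i) r) → o.TR.le xδ r.1 :=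
    fun r hr => hxδ ▸ o.isTC.plus_least _ _ hdef r.1 fun i => (hr i).1
  exact ⟨isCond_iUnion o p hcond hub hF, condLE_iUnion o p hub,
    fun r _ hr => iUnion_condLE o p (hleast r hr) hr⟩

/-- Assume `κ = κ^{<κ}` is an infinite cardinal and `o` is an iterand
satisfying the combinatorial clauses.  Let `δ < κ` be a limit ordinal and
`⟨p i : i < δ⟩` a `≤_{Q_o}`-increasing, `σ`-truly increasing sequence of conditions of
`Q_o`.  Let `xδ := plus(⟨tr_{p i} : i < δ⟩)` and assume `|⋃_{i<δ} F_{p i}| < σ(xδ)`.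
Then `(xδ, ⋃_{i<δ} F_{p i})` is the `≤_{Q_o}`-least upper bound of the sequence. -/
theorem trulyIncreasing_lub {κ : Cardinal.{u}} (hκinf : ℵ₀ ≤ κ) (hκ : κ ^< κ = κ)
    (o : Iterand.{u} κ) (δ : Ordinal.{u}) (hδ : Order.IsSuccLimit δ) (hδκ : δ < κ.ord)
    (p : Set.Iio δ → o.TR.Carrier × Set o.At)
    (hcond : ∀ i, IsCond o (p i))
    (hinc : ∀ i j : Set.Iio δ, (i : Ordinal.{u}) ≤ (j : Ordinal.{u}) →
      condLE o (p i) (p j))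
    (htruly : ∀ i j : Set.Iio δ, (i : Ordinal.{u}) < (j : Ordinal.{u}) →
      o.σ (p i).1 < o.σ (p j).1 ∨ (o.σ (p i).1 = κ ∧ o.σ (p j).1 = κ))
    (xδ : o.TR.Carrier) (hxδ : xδ = o.TR.plus (Set.Iio δ) fun i => (p i).1)
    (hF : #(⋃ i, (p i).2) < o.σ xδ) :
    IsCond o (xδ, ⋃ i, (p i).2) ∧
    (∀ i, condLE o (p i) (xδ, ⋃ i, (p i).2)) ∧
    ∀ r : o.TR.Carrier × Set o.At, IsCond o r → (∀ i, condLE o (p i) r) →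
      condLE o (xδ, ⋃ i, (p i).2) r :=
  trulyIncreasing_lub_general o δ hδκ p hcond hinc xδ hxδ hF
end

section
/- Assume κ = κ^{<κ} is an infinite cardinal and o is an iterand satisfying the combinatorial clauses. Suppose p_i ∈ Q_o with tr_{p_i} = x_i for i < i_*, the sequence ⟨x_i : i < i_*⟩ lies in dom(plus_{TR_o}) with y := plus_{TR_o}(⟨x_i : i < i_*⟩), i_* < σ_o(x_0), and |⋃_{i<i_*} F_{p_i}| < σ_o(y). Then (y, ⋃_{i<i_*} F_{p_i}) is a condition of Q_o and is a common upper bound of {p_i : i < i_*} in (Q_o, ≤_{Q_o}). -/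
universe u

open Cardinal

variable {κ : Cardinal.{u}}

namespace IsCond

variable {o : Iterand.{u} κ}

theorem le_and_mem_A_of_le {t y : o.TR.Carrier} {F : Set o.At} (hp : IsCond o (t, F))
    (hty : o.TR.le t y) {q : o.At} (hq : q ∈ F) : o.TR.le (o.tr q) y ∧ y ∈ o.A q :=
  have ⟨hqt, htA⟩ := hp.2 q hq
  ⟨o.isTC.le_trans hqt hty, o.A_upward q t htA y hty⟩

theorem iUnion_of_le {ι : Type*} {p : ι → o.TR.Carrier × Set o.At} (hp : ∀ i, IsCond o (p i))
    {y : o.TR.Carrier} (hle : ∀ i, o.TR.le (p i).1 y) (hF : #(⋃ i, (p i).2) < o.σ y) :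
    IsCond o (y, ⋃ i, (p i).2) := by
  refine ⟨hF, fun q hq => ?_⟩
  obtain ⟨i, hqi⟩ := Set.mem_iUnion.1 hq
  exact (hp i).le_and_mem_A_of_le (hle i) hqi

end IsCond

theorem condLE_iUnion_of_le {o : Iterand.{u} κ} {ι : Type*} {p : ι → o.TR.Carrier × Set o.At}
    {y : o.TR.Carrier} (hle : ∀ i, o.TR.le (p i).1 y) (i : ι) :
    condLE o (p i) (y, ⋃ i, (p i).2) :=
  ⟨hle i, Set.subset_iUnion (fun j => (p j).2) i⟩

theorem common_upperBound_of_plusDefined_general {κ : Cardinal.{u}}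
    (o : Iterand.{u} κ)
    (i_star : Ordinal.{u})
    (p : Set.Iio i_star → o.TR.Carrier × Set o.At)
    (hcond : ∀ i, IsCond o (p i))
    (x : Set.Iio i_star → o.TR.Carrier) (hx : ∀ i, (p i).1 = x i)
    (hdef : o.TR.plusDefined (Set.Iio i_star) x)
    (y : o.TR.Carrier) (hy : y = o.TR.plus (Set.Iio i_star) x)
    (hF : #(⋃ i, (p i).2) < o.σ y) :
    IsCond o (y, ⋃ i, (p i).2) ∧ ∀ i, condLE o (p i) (y, ⋃ i, (p i).2) := by
  have hle : ∀ i, o.TR.le (p i).1 y := fun i => by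
    rw [hx i, hy]
    exact o.isTC.plus_upperBound _ x hdef i
  exact ⟨IsCond.iUnion_of_le hcond hle hF, condLE_iUnion_of_le hle⟩

/-- Assume `κ = κ^{<κ}` is an infinite cardinal and `o` is an iterand
satisfying the combinatorial clauses.  Suppose `p i ∈ Q_o` with `tr_{p i} = x i` for
`i < i⋆`, the sequence `⟨x i : i < i⋆⟩` lies in the domain of `plus` with value `y`,
`i⋆ < σ(x 0)`, and `|⋃_{i<i⋆} F_{p i}| < σ(y)`.  Then `(y, ⋃_{i<i⋆} F_{p i})` is a
condition of `Q_o` and a common upper bound of the `p i`. -/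
theorem common_upperBound_of_plusDefined {κ : Cardinal.{u}} (hκinf : ℵ₀ ≤ κ)
    (hκ : κ ^< κ = κ) (o : Iterand.{u} κ)
    (i_star : Ordinal.{u}) (h0 : (0 : Ordinal.{u}) < i_star)
    (p : Set.Iio i_star → o.TR.Carrier × Set o.At)
    (hcond : ∀ i, IsCond o (p i))
    (x : Set.Iio i_star → o.TR.Carrier) (hx : ∀ i, (p i).1 = x i)
    (hdef : o.TR.plusDefined (Set.Iio i_star) x)
    (y : o.TR.Carrier) (hy : y = o.TR.plus (Set.Iio i_star) x)
    (hσ : i_star < (o.σ (x ⟨0, h0⟩)).ord)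
    (hF : #(⋃ i, (p i).2) < o.σ y) :
    IsCond o (y, ⋃ i, (p i).2) ∧ ∀ i, condLE o (p i) (y, ⋃ i, (p i).2) :=
  common_upperBound_of_plusDefined_general o i_star p hcond x hx hdef y hy hF
end

section
/- The class of combinatorial templates with ≤_M has amalgamation: if m₀, m₁, m₂ are combinatorial templates with m₀ ≤_M m₁, m₀ ≤_M m₂, and L_{m₀} = L_{m₁} ∩ L_{m₂}, then there exists a combinatorial template m_* such that: L_{m_*} = L_{m₁} ∪ L_{m₂}; m₁ ≤_M m_* and m₂ ≤_M m_*; A_{m_*,s} = A_{m_ℓ,s} whenever s ∈ L_{m_ℓ} \ L_{m₀} (for ℓ = 1,2); and A_{m_*,s} = A_{m₁,s} ∪ A_{m₂,s} whenever s ∈ L_{m₀}. -/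
universe u

open Cardinal

/-- A combinatorial template on an ambient type `τ`: a linear order on a set `L ⊆ τ`
together with, for each `t ∈ L`, a family `A t` of subsets of `{s ∈ L : s < t}`
containing `∅`.  (The relation `lt` and the family-function `A` are pinned down outside
of `L` to make the notion extensional.) -/
structure CombTemplate (τ : Type u) : Type u where
  /-- the underlying set of the linear order `L_m`. -/
  L : Set τ
  /-- the strict order relation of `L_m`. -/
  lt : τ → τ → Prop
  lt_mem : ∀ {s t}, lt s t → s ∈ L ∧ t ∈ L
  lt_irrefl : ∀ s, ¬lt s s
  lt_trans : ∀ {r s t}, lt r s → lt s t → lt r t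
  lt_total : ∀ {s t}, s ∈ L → t ∈ L → lt s t ∨ s = t ∨ lt t s
  /-- the memory: for `t ∈ L`, a family of subsets of `{s ∈ L : lt s t}`. -/
  A : τ → Set (Set τ)
  A_dom : ∀ t, t ∉ L → A t = ∅
  A_sub : ∀ {t}, t ∈ L → ∀ a ∈ A t, ∀ s ∈ a, lt s t
  A_empty : ∀ t ∈ L, ∅ ∈ A t

/-- The relation `≤_M` on combinatorial templates: `L_{m₁} ⊆ L_{m₂}` as linear orders and
`A_{m₁,t} ⊆ A_{m₂,t}` for every `t ∈ L_{m₁}`. -/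
def MLE {τ : Type u} (m₁ m₂ : CombTemplate τ) : Prop :=
  m₁.L ⊆ m₂.L ∧
  (∀ s t, s ∈ m₁.L → t ∈ m₁.L → (m₁.lt s t ↔ m₂.lt s t)) ∧
  ∀ t ∈ m₁.L, m₁.A t ⊆ m₂.A t

/-- Combinatorial templates have amalgamation: if `m₀ ≤_M m₁`,
`m₀ ≤_M m₂` and `L_{m₀} = L_{m₁} ∩ L_{m₂}`, then there is a combinatorial template `m⋆`
with `L_{m⋆} = L_{m₁} ∪ L_{m₂}`, `m₁ ≤_M m⋆`, `m₂ ≤_M m⋆`, whose memory is `A_{m ℓ, s}`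
for `s ∈ L_{m ℓ} \ L_{m₀}` (`ℓ = 1, 2`) and `A_{m₁,s} ∪ A_{m₂,s}` for `s ∈ L_{m₀}`. -/
theorem MLE_amalgamation {τ : Type u} (m₀ m₁ m₂ : CombTemplate τ)
    (h₁ : MLE m₀ m₁) (h₂ : MLE m₀ m₂) (hL : m₀.L = m₁.L ∩ m₂.L) :
    ∃ mstar : CombTemplate τ,
      mstar.L = m₁.L ∪ m₂.L ∧
      MLE m₁ mstar ∧ MLE m₂ mstar ∧
      (∀ s ∈ m₁.L \ m₀.L, mstar.A s = m₁.A s) ∧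
      (∀ s ∈ m₂.L \ m₀.L, mstar.A s = m₂.A s) ∧
      ∀ s ∈ m₀.L, mstar.A s = m₁.A s ∪ m₂.A s := by
  classical
  obtain ⟨hL1, hlt1, hA1⟩ := h₁
  obtain ⟨hL2, hlt2, hA2⟩ := h₂
  have hcap : ∀ {x}, x ∈ m₁.L → x ∈ m₂.L → x ∈ m₀.L := by
    intro x hx hx'; rw [hL]; exact ⟨hx, hx'⟩
  have hagree : ∀ {r s}, r ∈ m₀.L → s ∈ m₀.L → (m₁.lt r s ↔ m₂.lt r s) :=
    fun hr hs => ((hlt1 _ _ hr hs).symm.trans (hlt2 _ _ hr hs))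
  set Lt : τ → τ → Prop := fun x y =>
    (x ∈ m₁.L ∧ y ∈ m₁.L ∧ m₁.lt x y) ∨
    (x ∈ m₂.L ∧ y ∈ m₂.L ∧ m₂.lt x y) ∨
    ((x ∈ m₁.L ∧ x ∉ m₀.L) ∧ (y ∈ m₂.L ∧ y ∉ m₀.L) ∧
      ∀ r ∈ m₀.L, m₁.lt r x → m₂.lt r y) ∨
    ((x ∈ m₂.L ∧ x ∉ m₀.L) ∧ (y ∈ m₁.L ∧ y ∉ m₀.L) ∧
      ∃ r ∈ m₀.L, m₂.lt x r ∧ m₁.lt r y) with hLtdef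
  have htrans : ∀ {x y z}, Lt x y → Lt y z → Lt x z := by
    intro x y z hxy hyz
    rcases hxy with ⟨hx1, hy1, h1⟩ | ⟨hx2, hy2, h2⟩ |
      ⟨⟨hx1, hx0⟩, ⟨hy2, hy0⟩, h3⟩ | ⟨⟨hx2, hx0⟩, ⟨hy1, hy0⟩, r, hr, hxr, hry⟩
    · -- first step via C1
      rcases hyz with ⟨hy1', hz1, h1'⟩ | ⟨hy2, hz2, h2'⟩ |
        ⟨⟨hy1', hy0⟩, ⟨hz2, hz0⟩, h3'⟩ | ⟨⟨hy2, hy0⟩, hzD, _⟩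
      · exact Or.inl ⟨hx1, hz1, m₁.lt_trans h1 h1'⟩
      · -- C1 then C2; y ∈ L₀
        have hy0 : y ∈ m₀.L := hcap hy1 hy2
        by_cases hx2 : x ∈ m₂.L
        · have hx0 : x ∈ m₀.L := hcap hx1 hx2
          exact Or.inr (Or.inl ⟨hx2, hz2, m₂.lt_trans ((hagree hx0 hy0).mp h1) h2'⟩)
        · by_cases hz1 : z ∈ m₁.L
          · have hz0 : z ∈ m₀.L := hcap hz1 hz2
            exact Or.inl ⟨hx1, hz1, m₁.lt_trans h1 ((hagree hy0 hz0).mpr h2')⟩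
          · refine Or.inr (Or.inr (Or.inl ⟨⟨hx1, fun h => hx2 (hL2 h)⟩,
              ⟨hz2, fun h => hz1 (hL1 h)⟩, ?_⟩))
            intro r hr hrx
            exact m₂.lt_trans ((hagree hr hy0).mp (m₁.lt_trans hrx h1)) h2'
      · -- C1 then C3
        by_cases hx0 : x ∈ m₀.L
        · exact Or.inr (Or.inl ⟨hL2 hx0, hz2, h3' x hx0 h1⟩)
        · exact Or.inr (Or.inr (Or.inl ⟨⟨hx1, hx0⟩, ⟨hz2, hz0⟩,
            fun r hr hrx => h3' r hr (m₁.lt_trans hrx h1)⟩))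
      · exact (hy0 (hcap hy1 hy2)).elim
    · -- first step via C2
      rcases hyz with ⟨hy1, hz1, h1'⟩ | ⟨hy2', hz2, h2'⟩ |
        ⟨⟨hy1, hy0⟩, _, _⟩ | ⟨⟨hy2', hy0⟩, ⟨hz1, hz0⟩, r, hr, hyr, hrz⟩
      · -- C2 then C1; y ∈ L₀
        have hy0 : y ∈ m₀.L := hcap hy1 hy2
        by_cases hx1 : x ∈ m₁.L
        · have hx0 : x ∈ m₀.L := hcap hx1 hx2
          exact Or.inl ⟨hx1, hz1, m₁.lt_trans ((hagree hx0 hy0).mpr h2) h1'⟩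
        · by_cases hz2 : z ∈ m₂.L
          · have hz0 : z ∈ m₀.L := hcap hz1 hz2
            exact Or.inr (Or.inl ⟨hx2, hz2, m₂.lt_trans h2 ((hagree hy0 hz0).mp h1')⟩)
          · exact Or.inr (Or.inr (Or.inr ⟨⟨hx2, fun h => hx1 (hL1 h)⟩,
              ⟨hz1, fun h => hz2 (hL2 h)⟩, y, hy0, h2, h1'⟩))
      · exact Or.inr (Or.inl ⟨hx2, hz2, m₂.lt_trans h2 h2'⟩)
      · exact (hy0 (hcap hy1 hy2)).elim
      · -- C2 then C4
        by_cases hx1 : x ∈ m₁.L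
        · have hx0 : x ∈ m₀.L := hcap hx1 hx2
          exact Or.inl ⟨hx1, hz1,
            m₁.lt_trans ((hagree hx0 hr).mpr (m₂.lt_trans h2 hyr)) hrz⟩
        · exact Or.inr (Or.inr (Or.inr ⟨⟨hx2, fun h => hx1 (hL1 h)⟩, ⟨hz1, hz0⟩,
            r, hr, m₂.lt_trans h2 hyr, hrz⟩))
    · -- first step via C3 (x ∈ L₁\L₀, y ∈ L₂\L₀)
      rcases hyz with ⟨hy1, _, _⟩ | ⟨hy2', hz2, h2'⟩ |
        ⟨⟨hy1, _⟩, _, _⟩ | ⟨⟨hy2', _⟩, ⟨hz1, hz0'⟩, r, hr, hyr, hrz⟩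
      · exact (hy0 (hcap hy1 hy2)).elim
      · -- C3 then C2
        by_cases hz1 : z ∈ m₁.L
        · have hz0 : z ∈ m₀.L := hcap hz1 hz2
          refine Or.inl ⟨hx1, hz1, ?_⟩
          rcases m₁.lt_total hx1 hz1 with h | h | h
          · exact h
          · exact (hx0 (h ▸ hz0)).elim
          · exact ((m₂.lt_irrefl y) (m₂.lt_trans h2' (h3 z hz0 h))).elim
        · exact Or.inr (Or.inr (Or.inl ⟨⟨hx1, hx0⟩, ⟨hz2, fun h => hz1 (hL1 h)⟩,
            fun r hr hrx => m₂.lt_trans (h3 r hr hrx) h2'⟩))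
      · exact (hy0 (hcap hy1 hy2)).elim
      · -- C3 then C4
        refine Or.inl ⟨hx1, hz1, ?_⟩
        rcases m₁.lt_total hx1 hz1 with h | h | h
        · exact h
        · subst h
          exact ((m₂.lt_irrefl y) (m₂.lt_trans hyr (h3 r hr hrz))).elim
        · exact ((m₂.lt_irrefl y)
            (m₂.lt_trans hyr (h3 r hr (m₁.lt_trans hrz h)))).elim
    · -- first step via C4 (x ∈ L₂\L₀, y ∈ L₁\L₀)
      rcases hyz with ⟨hy1', hz1, h1'⟩ | ⟨hy2, _, _⟩ |
        ⟨⟨hy1', _⟩, ⟨hz2, hz0⟩, h3'⟩ | ⟨⟨hy2, _⟩, _, _⟩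
      · -- C4 then C1
        by_cases hz2 : z ∈ m₂.L
        · have hz0 : z ∈ m₀.L := hcap hz1 hz2
          exact Or.inr (Or.inl ⟨hx2, hz2,
            m₂.lt_trans hxr ((hagree hr hz0).mp (m₁.lt_trans hry h1'))⟩)
        · exact Or.inr (Or.inr (Or.inr ⟨⟨hx2, hx0⟩, ⟨hz1, fun h => hz2 (hL2 h)⟩,
            r, hr, hxr, m₁.lt_trans hry h1'⟩))
      · exact (hy0 (hcap hy1 hy2)).elim
      · -- C4 then C3
        exact Or.inr (Or.inl ⟨hx2, hz2, m₂.lt_trans hxr (h3' r hr hry)⟩)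
      · exact (hy0 (hcap hy1 hy2)).elim
  have htotal : ∀ {s t}, s ∈ m₁.L ∪ m₂.L → t ∈ m₁.L ∪ m₂.L →
      Lt s t ∨ s = t ∨ Lt t s := by
    intro s t hs ht
    by_cases hs1 : s ∈ m₁.L <;> by_cases ht1 : t ∈ m₁.L
    · rcases m₁.lt_total hs1 ht1 with h | h | h
      · exact Or.inl (Or.inl ⟨hs1, ht1, h⟩)
      · exact Or.inr (Or.inl h)
      · exact Or.inr (Or.inr (Or.inl ⟨ht1, hs1, h⟩))
    · have ht2 : t ∈ m₂.L := ht.resolve_left ht1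
      have ht0 : t ∉ m₀.L := fun h => ht1 (hL1 h)
      by_cases hs2 : s ∈ m₂.L
      · rcases m₂.lt_total hs2 ht2 with h | h | h
        · exact Or.inl (Or.inr (Or.inl ⟨hs2, ht2, h⟩))
        · exact Or.inr (Or.inl h)
        · exact Or.inr (Or.inr (Or.inr (Or.inl ⟨ht2, hs2, h⟩)))
      · have hs0 : s ∉ m₀.L := fun h => hs2 (hL2 h)
        by_cases hc : ∃ r ∈ m₀.L, m₂.lt t r ∧ m₁.lt r s
        · exact Or.inr (Or.inr (Or.inr (Or.inr (Or.inr ⟨⟨ht2, ht0⟩, ⟨hs1, hs0⟩, hc⟩))))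
        · push_neg at hc
          refine Or.inl (Or.inr (Or.inr (Or.inl ⟨⟨hs1, hs0⟩, ⟨ht2, ht0⟩, ?_⟩)))
          intro r hr hrs
          rcases m₂.lt_total (hL2 hr) ht2 with h | h | h
          · exact h
          · exact (ht0 (h ▸ hr)).elim
          · exact absurd hrs (hc r hr h)
    · have hs2 : s ∈ m₂.L := hs.resolve_left hs1
      have hs0 : s ∉ m₀.L := fun h => hs1 (hL1 h)
      by_cases ht2 : t ∈ m₂.L
      · rcases m₂.lt_total hs2 ht2 with h | h | h
        · exact Or.inl (Or.inr (Or.inl ⟨hs2, ht2, h⟩))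
        · exact Or.inr (Or.inl h)
        · exact Or.inr (Or.inr (Or.inr (Or.inl ⟨ht2, hs2, h⟩)))
      · have ht0 : t ∉ m₀.L := fun h => ht2 (hL2 h)
        by_cases hc : ∃ r ∈ m₀.L, m₂.lt s r ∧ m₁.lt r t
        · exact Or.inl (Or.inr (Or.inr (Or.inr ⟨⟨hs2, hs0⟩, ⟨ht1, ht0⟩, hc⟩)))
        · push_neg at hc
          refine Or.inr (Or.inr (Or.inr (Or.inr (Or.inl ⟨⟨ht1, ht0⟩, ⟨hs2, hs0⟩, ?_⟩))))
          intro r hr hrt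
          rcases m₂.lt_total (hL2 hr) hs2 with h | h | h
          · exact h
          · exact (hs0 (h ▸ hr)).elim
          · exact absurd hrt (hc r hr h)
    · have hs2 : s ∈ m₂.L := hs.resolve_left hs1
      have ht2 : t ∈ m₂.L := ht.resolve_left ht1
      rcases m₂.lt_total hs2 ht2 with h | h | h
      · exact Or.inl (Or.inr (Or.inl ⟨hs2, ht2, h⟩))
      · exact Or.inr (Or.inl h)
      · exact Or.inr (Or.inr (Or.inr (Or.inl ⟨ht2, hs2, h⟩)))
  refine ⟨{ L := m₁.L ∪ m₂.L
            lt := Lt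
            lt_mem := ?_
            lt_irrefl := ?_
            lt_trans := fun h h' => htrans h h'
            lt_total := fun hs ht => htotal hs ht
            A := fun t => if t ∈ m₀.L then m₁.A t ∪ m₂.A t
                          else if t ∈ m₁.L then m₁.A t
                          else if t ∈ m₂.L then m₂.A t else ∅
            A_dom := ?_
            A_sub := ?_
            A_empty := ?_ }, rfl, ?_, ?_, ?_, ?_, ?_⟩
  · -- lt_mem
    rintro s t (⟨hs, ht, _⟩ | ⟨hs, ht, _⟩ | ⟨⟨hs, _⟩, ⟨ht, _⟩, _⟩ | ⟨⟨hs, _⟩, ⟨ht, _⟩, _⟩)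
    · exact ⟨Or.inl hs, Or.inl ht⟩
    · exact ⟨Or.inr hs, Or.inr ht⟩
    · exact ⟨Or.inl hs, Or.inr ht⟩
    · exact ⟨Or.inr hs, Or.inl ht⟩
  · -- lt_irrefl
    rintro s (⟨_, _, h⟩ | ⟨_, _, h⟩ | ⟨⟨hs1, hs0⟩, ⟨hs2, _⟩, _⟩ | ⟨⟨hs2, hs0⟩, ⟨hs1, _⟩, _⟩)
    · exact m₁.lt_irrefl s h
    · exact m₂.lt_irrefl s h
    · exact hs0 (hcap hs1 hs2)
    · exact hs0 (hcap hs1 hs2)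
  · -- A_dom
    intro t ht
    have h1 : t ∉ m₁.L := fun h => ht (Or.inl h)
    have h2 : t ∉ m₂.L := fun h => ht (Or.inr h)
    have h0 : t ∉ m₀.L := fun h => h1 (hL1 h)
    simp [h0, h1, h2]
  · -- A_sub
    intro t ht a ha s hsa
    replace ha : a ∈ (if t ∈ m₀.L then m₁.A t ∪ m₂.A t
      else if t ∈ m₁.L then m₁.A t else if t ∈ m₂.L then m₂.A t else ∅) := ha
    by_cases ht0 : t ∈ m₀.L
    · rw [if_pos ht0] at ha
      rcases ha with ha | ha
      · have h := m₁.A_sub (hL1 ht0) a ha s hsa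
        exact Or.inl ⟨(m₁.lt_mem h).1, (m₁.lt_mem h).2, h⟩
      · have h := m₂.A_sub (hL2 ht0) a ha s hsa
        exact Or.inr (Or.inl ⟨(m₂.lt_mem h).1, (m₂.lt_mem h).2, h⟩)
    · by_cases ht1 : t ∈ m₁.L
      · rw [if_neg ht0, if_pos ht1] at ha
        have h := m₁.A_sub ht1 a ha s hsa
        exact Or.inl ⟨(m₁.lt_mem h).1, (m₁.lt_mem h).2, h⟩
      · have ht2 : t ∈ m₂.L := ht.resolve_left ht1
        rw [if_neg ht0, if_neg ht1, if_pos ht2] at ha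
        have h := m₂.A_sub ht2 a ha s hsa
        exact Or.inr (Or.inl ⟨(m₂.lt_mem h).1, (m₂.lt_mem h).2, h⟩)
  · -- A_empty
    intro t ht
    show ∅ ∈ (if t ∈ m₀.L then m₁.A t ∪ m₂.A t
      else if t ∈ m₁.L then m₁.A t else if t ∈ m₂.L then m₂.A t else ∅)
    by_cases ht0 : t ∈ m₀.L
    · rw [if_pos ht0]; exact Or.inl (m₁.A_empty t (hL1 ht0))
    · by_cases ht1 : t ∈ m₁.L
      · rw [if_neg ht0, if_pos ht1]; exact m₁.A_empty t ht1
      · have ht2 : t ∈ m₂.L := ht.resolve_left ht1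
        rw [if_neg ht0, if_neg ht1, if_pos ht2]; exact m₂.A_empty t ht2
  · -- MLE m₁ mstar
    refine ⟨Set.subset_union_left, ?_, ?_⟩
    · intro s t hs ht
      constructor
      · exact fun h => Or.inl ⟨hs, ht, h⟩
      · rintro (⟨_, _, h⟩ | ⟨hs2, ht2, h⟩ | ⟨_, ⟨ht2, ht0⟩, _⟩ | ⟨⟨hs2, hs0⟩, _, _⟩)
        · exact h
        · exact (hagree (hcap hs hs2) (hcap ht ht2)).mpr h
        · exact (ht0 (hcap ht ht2)).elim
        · exact (hs0 (hcap hs hs2)).elim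
    · intro t ht a ha
      by_cases ht0 : t ∈ m₀.L
      · show a ∈ if t ∈ m₀.L then m₁.A t ∪ m₂.A t
          else if t ∈ m₁.L then m₁.A t else if t ∈ m₂.L then m₂.A t else ∅
        rw [if_pos ht0]; exact Or.inl ha
      · show a ∈ if t ∈ m₀.L then m₁.A t ∪ m₂.A t
          else if t ∈ m₁.L then m₁.A t else if t ∈ m₂.L then m₂.A t else ∅
        rw [if_neg ht0, if_pos ht]; exact ha
  · -- MLE m₂ mstar
    refine ⟨Set.subset_union_right, ?_, ?_⟩
    · intro s t hs ht
      constructor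
      · exact fun h => Or.inr (Or.inl ⟨hs, ht, h⟩)
      · rintro (⟨hs1, ht1, h⟩ | ⟨_, _, h⟩ | ⟨⟨hs1, hs0⟩, _, _⟩ | ⟨_, ⟨ht1, ht0⟩, _⟩)
        · exact (hagree (hcap hs1 hs) (hcap ht1 ht)).mp h
        · exact h
        · exact (hs0 (hcap hs1 hs)).elim
        · exact (ht0 (hcap ht1 ht)).elim
    · intro t ht a ha
      show a ∈ if t ∈ m₀.L then m₁.A t ∪ m₂.A t
        else if t ∈ m₁.L then m₁.A t else if t ∈ m₂.L then m₂.A t else ∅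
      by_cases ht0 : t ∈ m₀.L
      · rw [if_pos ht0]; exact Or.inr ha
      · have ht1 : t ∉ m₁.L := fun h => ht0 (hcap h ht)
        rw [if_neg ht0, if_neg ht1, if_pos ht]; exact ha
  · -- A on L₁ \ L₀
    rintro s ⟨hs1, hs0⟩
    show (if s ∈ m₀.L then m₁.A s ∪ m₂.A s
      else if s ∈ m₁.L then m₁.A s else if s ∈ m₂.L then m₂.A s else ∅) = m₁.A s
    rw [if_neg hs0, if_pos hs1]
  · -- A on L₂ \ L₀
    rintro s ⟨hs2, hs0⟩
    have hs1 : s ∉ m₁.L := fun h => hs0 (hcap h hs2)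
    show (if s ∈ m₀.L then m₁.A s ∪ m₂.A s
      else if s ∈ m₁.L then m₁.A s else if s ∈ m₂.L then m₂.A s else ∅) = m₂.A s
    rw [if_neg hs0, if_neg hs1, if_pos hs2]
  · -- A on L₀
    intro s hs0
    show (if s ∈ m₀.L then m₁.A s ∪ m₂.A s
      else if s ∈ m₁.L then m₁.A s else if s ∈ m₂.L then m₂.A s else ∅) = m₁.A s ∪ m₂.A s
    rw [if_pos hs0]
end

section
/- Assume κ = κ^{<κ} is an infinite cardinal. If δ is a limit ordinal and ⟨n_α : α < δ⟩ is a ≤_N-increasing sequence in N, then it has a ≤_N-least upper bound n, determined by: m_n = ⋃_{α<δ} m_{n_α} (so L_n = ⋃_{α<δ} L_{n_α} with the union order, and for s ∈ L_{n_α}, A_{n,s} = ⋃_{β∈[α,δ)} A_{n_β,s}); W_n = ⋃_{α<δ} W_{n_α}; λ_{n,s} = λ_{n_α,s} and B_{n,s} = B_{n_α,s} whenever s ∈ L_{n_α}; and, for s ∈ L_{n_α} \ W_n, I_{n,s} is the closure of ⋃_{β∈[α,δ)} I_{n_β,s} under unions of fewer than κ members. -/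
universe u

open Cardinal

/-- A member of the class `N`: a combinatorial template together with a set `W ⊆ L`,
cardinals `λ_t = λ_t ^ κ`, families `B t` and `κ`-complete ideals `I t` on `B t`
(for `t ∈ L \ W`), subject to the requirements of Definition `N`.  (The data are pinned
down outside their intended domains to make the notion extensional.) -/
structure NTemplate (τ : Type u) (κ : Cardinal.{u}) : Type (u + 1) where
  ct : CombTemplate τ
  W : Set τ
  W_sub : W ⊆ ct.L
  lam : τ → Cardinal.{u}
  B : τ → Set (Set τ)
  Idl : τ → Set (Set (Set τ))
  lam_pow : ∀ t ∈ ct.L, lam t ^ κ = lam t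
  lam_dom : ∀ t ∉ ct.L, lam t = 0
  B_dom : ∀ t ∉ ct.L, B t = ∅
  Idl_dom : ∀ t, t ∉ ct.L \ W → Idl t = ∅
  /-- for `t ∈ W`: `B t = A t` … -/
  B_eq_of_mem_W : ∀ t ∈ W, B t = ct.A t
  /-- … `|A t| ≤ λ t` … -/
  A_card_of_mem_W : ∀ t ∈ W, #(ct.A t) ≤ lam t
  /-- … and every `a ∈ A t` has cardinality `≤ λ t` and is a subset of `W`. -/
  A_elt_of_mem_W : ∀ t ∈ W, ∀ a ∈ ct.A t, #a ≤ lam t ∧ a ⊆ W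
  /-- for `t ∈ L \ W`: `B t ⊆ A t` is a family of subsets of `W` … -/
  B_subA : ∀ t ∈ ct.L \ W, B t ⊆ ct.A t
  B_elt : ∀ t ∈ ct.L \ W, ∀ b ∈ B t, b ⊆ W ∧ #b ≤ lam t
  /-- … with `|B t| ≤ 2 ^ λ t` … -/
  B_card : ∀ t ∈ ct.L \ W, #(B t) ≤ 2 ^ lam t
  /-- … and `Idl t` is a `κ`-complete ideal on `B t` … -/
  Idl_sub : ∀ t ∈ ct.L \ W, ∀ X ∈ Idl t, X ⊆ B t
  Idl_down : ∀ t ∈ ct.L \ W, ∀ X ∈ Idl t, ∀ Y : Set (Set τ), Y ⊆ X → Y ∈ Idl t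
  Idl_iUnion : ∀ t ∈ ct.L \ W, ∀ (ι : Type u) (f : ι → Set (Set τ)), #ι < κ →
    (∀ i, f i ∈ Idl t) → (⋃ i, f i) ∈ Idl t
  /-- … such that `{b ∈ B t : a ∩ b ≠ ∅} ∈ Idl t` for every `a ∈ A t`. -/
  Idl_spec : ∀ t ∈ ct.L \ W, ∀ a ∈ ct.A t, {b ∈ B t | (a ∩ b).Nonempty} ∈ Idl t

/-- The relation `≤_N` on `N`. -/
def NLE {τ : Type u} {κ : Cardinal.{u}} (n₁ n₂ : NTemplate τ κ) : Prop :=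
  MLE n₁.ct n₂.ct ∧ n₁.W = n₂.W ∩ n₁.ct.L ∧
  ∀ s ∈ n₁.ct.L, n₁.lam s = n₂.lam s ∧ n₁.B s = n₂.B s ∧
    n₁.ct.A s ⊆ n₂.ct.A s ∧ n₁.Idl s ⊆ n₂.Idl s

/-- A subset `L ⊆ L_n` is `n`-closed when every member of every `B_{n,s}`, `s ∈ L`, is a
subset of `L`. -/
def NClosed {τ : Type u} {κ : Cardinal.{u}} (n : NTemplate τ κ) (L : Set τ) : Prop :=
  ∀ s ∈ L, ∀ a ∈ n.B s, a ⊆ L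

/-!
The least upper bound is the union of the chain, componentwise. Along a `≤_N`-chain the order,
`W`, `λ` and `B` never change on points already present, so their unions are well defined and
agree with every member of the chain; the families `A` only grow, and so do the ideals. The
union of the ideals need not be `κ`-complete, so it is closed under unions of fewer than `κ`
members; that this closure is again closed under such unions is where the regularity of `κ`
(a consequence of `κ^{<κ} = κ`, by König) enters.
-/

open Set

theorem Cardinal.isRegular_of_powerlt_self_s15 {κ : Cardinal} (hκinf : ℵ₀ ≤ κ)
    (hκ : κ ^< κ = κ) : κ.IsRegular :=
  ⟨hκinf, not_lt.1 fun hcof =>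
    ((lt_power_cof_ord hκinf).trans_le (le_powerlt κ hcof)).ne hκ.symm⟩

theorem Monotone.iUnion_eq_setOf_exists_ge {ι α : Type*} [Preorder ι] [IsDirectedOrder ι]
    {F : ι → Set α} (hF : Monotone F) (i : ι) :
    ⋃ j, F j = {x | ∃ j, i ≤ j ∧ x ∈ F j} := by
  ext x
  refine ⟨fun hx => ?_, fun ⟨j, _, hx⟩ => mem_iUnion.2 ⟨j, hx⟩⟩
  obtain ⟨j, hx⟩ := mem_iUnion.1 hx
  obtain ⟨k, hik, hjk⟩ := directed_of (· ≤ ·) i j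
  exact ⟨k, hik, hF hjk hx⟩

namespace Set

def iUnionClosure {α : Type u} (κ : Cardinal.{u}) (S : Set (Set α)) : Set (Set α) :=
  {X | ∃ (ι : Type u) (f : ι → Set α), #ι < κ ∧ (∀ k, f k ∈ S) ∧ X = ⋃ k, f k}

variable {α : Type u} {κ : Cardinal.{u}} {S T : Set (Set α)}

theorem subset_iUnionClosure (hκ : 1 < κ) : S ⊆ iUnionClosure κ S :=
  fun X hX => ⟨PUnit, fun _ => X, by rwa [mk_punit], fun _ => hX, (iUnion_const X).symm⟩

theorem iUnion_mem_iUnionClosure (hκ : κ.IsRegular) {ι : Type u} {f : ι → Set α}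
    (hι : #ι < κ) (hf : ∀ i, f i ∈ iUnionClosure κ S) : ⋃ i, f i ∈ iUnionClosure κ S := by
  choose ι' g hg hgS hfg using hf
  refine ⟨Σ i, ι' i, fun p => g p.1 p.2, ?_, fun p => hgS p.1 p.2, ?_⟩
  · rw [mk_sigma]
    exact sum_lt_of_isRegular hκ hι hg
  · rw [iUnion_congr hfg, iUnion_sigma']

theorem iUnionClosure_subset
    (hT : ∀ (ι : Type u) (f : ι → Set α), #ι < κ → (∀ i, f i ∈ T) → ⋃ i, f i ∈ T)
    (hST : S ⊆ T) : iUnionClosure κ S ⊆ T := by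
  rintro _ ⟨ι, f, hι, hf, rfl⟩
  exact hT ι f hι fun k => hST (hf k)

theorem mem_iUnionClosure_of_subset (hS : ∀ X ∈ S, ∀ Y ⊆ X, Y ∈ S) {X Y : Set α}
    (hX : X ∈ iUnionClosure κ S) (hYX : Y ⊆ X) : Y ∈ iUnionClosure κ S := by
  obtain ⟨ι, f, hι, hf, rfl⟩ := hX
  refine ⟨ι, fun k => f k ∩ Y, hι, fun k => hS _ (hf k) _ inter_subset_left, ?_⟩
  rw [← iUnion_inter, inter_eq_self_of_subset_right hYX]

theorem subset_of_mem_iUnionClosure {B X : Set α} (hS : ∀ Y ∈ S, Y ⊆ B)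
    (hX : X ∈ iUnionClosure κ S) : X ⊆ B := by
  obtain ⟨ι, f, -, hf, rfl⟩ := hX
  exact iUnion_subset fun k => hS _ (hf k)

end Set

variable {τ : Type u} {κ : Cardinal.{u}}

theorem CombTemplate.mem_L_of_mem_A (m : CombTemplate τ) {t : τ} {a : Set τ}
    (ha : a ∈ m.A t) : t ∈ m.L := by
  by_contra ht
  rw [m.A_dom t ht] at ha
  exact ha

theorem MLE.lt {m₁ m₂ : CombTemplate τ} (h : MLE m₁ m₂) {s t : τ} (hst : m₁.lt s t) :
    m₂.lt s t :=
  (h.2.1 s t (m₁.lt_mem hst).1 (m₁.lt_mem hst).2).1 hst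

theorem MLE.A_subset {m₁ m₂ : CombTemplate τ} (h : MLE m₁ m₂) (t : τ) : m₁.A t ⊆ m₂.A t :=
  fun _ ha => h.2.2 t (m₁.mem_L_of_mem_A ha) ha

namespace CombTemplate

variable {ι : Type*} {m : ι → CombTemplate τ}

theorem exists_lt_iff_of_directed (hm : Directed MLE m) {k : ι} {s t : τ}
    (hs : s ∈ (m k).L) (ht : t ∈ (m k).L) : (∃ j, (m j).lt s t) ↔ (m k).lt s t := by
  refine ⟨fun ⟨j, hj⟩ => ?_, fun h => ⟨k, h⟩⟩
  obtain ⟨p, hkp, hjp⟩ := hm k j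
  exact (hkp.2.1 s t hs ht).2 (hjp.lt hj)

def iUnion (m : ι → CombTemplate τ) (hm : Directed MLE m) : CombTemplate τ where
  L := ⋃ i, (m i).L
  lt s t := ∃ i, (m i).lt s t
  lt_mem := fun ⟨i, h⟩ => ⟨mem_iUnion.2 ⟨i, ((m i).lt_mem h).1⟩,
    mem_iUnion.2 ⟨i, ((m i).lt_mem h).2⟩⟩
  lt_irrefl s := fun ⟨i, h⟩ => (m i).lt_irrefl s h
  lt_trans := by
    rintro r s t ⟨i, hi⟩ ⟨j, hj⟩
    obtain ⟨k, hik, hjk⟩ := hm i j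
    exact ⟨k, (m k).lt_trans (hik.lt hi) (hjk.lt hj)⟩
  lt_total := by
    intro s t hs ht
    obtain ⟨i, hsi⟩ := mem_iUnion.1 hs
    obtain ⟨j, htj⟩ := mem_iUnion.1 ht
    obtain ⟨k, hik, hjk⟩ := hm i j
    rcases (m k).lt_total (hik.1 hsi) (hjk.1 htj) with h | h | h
    exacts [Or.inl ⟨k, h⟩, Or.inr (Or.inl h), Or.inr (Or.inr ⟨k, h⟩)]
  A t := ⋃ i, (m i).A t
  A_dom t ht := iUnion_eq_empty.2 fun i => (m i).A_dom t fun h => ht (mem_iUnion.2 ⟨i, h⟩)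
  A_sub := by
    intro t _ a ha s hs
    obtain ⟨i, hai⟩ := mem_iUnion.1 ha
    exact ⟨i, (m i).A_sub ((m i).mem_L_of_mem_A hai) a hai s hs⟩
  A_empty t ht :=
    let ⟨i, hti⟩ := mem_iUnion.1 ht
    mem_iUnion.2 ⟨i, (m i).A_empty t hti⟩

variable (hm : Directed MLE m)

theorem mle_iUnion (i : ι) : MLE (m i) (iUnion m hm) :=
  ⟨subset_iUnion (fun j => (m j).L) i,
    fun _ _ hs ht => (exists_lt_iff_of_directed hm hs ht).symm,
    fun t _ => subset_iUnion (fun j => (m j).A t) i⟩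

theorem iUnion_mle {m' : CombTemplate τ} (h : ∀ i, MLE (m i) m') : MLE (iUnion m hm) m' := by
  refine ⟨iUnion_subset fun i => (h i).1, fun s t hs ht => ?_,
    fun t _ => iUnion_subset fun i => (h i).A_subset t⟩
  obtain ⟨i, hsi⟩ := mem_iUnion.1 hs
  obtain ⟨j, htj⟩ := mem_iUnion.1 ht
  obtain ⟨k, hik, hjk⟩ := hm i j
  exact (exists_lt_iff_of_directed hm (hik.1 hsi) (hjk.1 htj)).trans
    ((h k).2.1 s t (hik.1 hsi) (hjk.1 htj))

end CombTemplate

namespace NTemplate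

theorem mem_L_of_mem_B (n : NTemplate τ κ) {t : τ} {b : Set τ} (hb : b ∈ n.B t) :
    t ∈ n.ct.L := by
  by_contra ht
  rw [n.B_dom t ht] at hb
  exact hb

theorem mem_diff_of_mem_Idl (n : NTemplate τ κ) {t : τ} {X : Set (Set τ)}
    (hX : X ∈ n.Idl t) : t ∈ n.ct.L \ n.W := by
  by_contra ht
  rw [n.Idl_dom t ht] at hX
  exact hX

theorem B_eq_A_of_notMem_diff (n : NTemplate τ κ) {t : τ} (ht : t ∉ n.ct.L \ n.W) :
    n.B t = n.ct.A t := by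
  by_cases htW : t ∈ n.W
  · exact n.B_eq_of_mem_W t htW
  · have htL : t ∉ n.ct.L := fun h => ht ⟨h, htW⟩
    rw [n.B_dom t htL, n.ct.A_dom t htL]

end NTemplate

theorem NLE.Idl_subset {n₁ n₂ : NTemplate τ κ} (h : NLE n₁ n₂) (t : τ) :
    n₁.Idl t ⊆ n₂.Idl t :=
  fun _ hX => (h.2.2 t (n₁.mem_diff_of_mem_Idl hX).1).2.2.2 hX

theorem NLE.mem_W_iff {n₁ n₂ : NTemplate τ κ} (h : NLE n₁ n₂) {t : τ} (ht : t ∈ n₁.ct.L) :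
    t ∈ n₁.W ↔ t ∈ n₂.W := by
  rw [h.2.1]
  exact ⟨fun h' => h'.1, fun h' => ⟨h', ht⟩⟩

namespace NTemplate

variable {ι : Type*} {n : ι → NTemplate τ κ}

theorem directed_mle_ct (hn : Directed NLE n) : Directed MLE fun i => (n i).ct :=
  hn.mono_comp _ fun _ _ h => h.1

theorem lam_eq_of_directed (hn : Directed NLE n) {i j : ι} {s : τ} (hi : s ∈ (n i).ct.L)
    (hj : s ∈ (n j).ct.L) : (n i).lam s = (n j).lam s := by
  obtain ⟨k, hik, hjk⟩ := hn i j
  rw [(hik.2.2 s hi).1, (hjk.2.2 s hj).1]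

theorem B_eq_of_directed (hn : Directed NLE n) {i j : ι} {s : τ} (hi : s ∈ (n i).ct.L)
    (hj : s ∈ (n j).ct.L) : (n i).B s = (n j).B s := by
  obtain ⟨k, hik, hjk⟩ := hn i j
  rw [(hik.2.2 s hi).2.1, (hjk.2.2 s hj).2.1]

theorem mem_W_iff_of_directed (hn : Directed NLE n) {i j : ι} {s : τ} (hi : s ∈ (n i).ct.L)
    (hj : s ∈ (n j).ct.L) : s ∈ (n i).W ↔ s ∈ (n j).W := by
  obtain ⟨k, hik, hjk⟩ := hn i j
  rw [hik.mem_W_iff hi, hjk.mem_W_iff hj]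

theorem iSup_lam_eq (hn : Directed NLE n) {i : ι} {s : τ} (hi : s ∈ (n i).ct.L) :
    ⨆ j, (n j).lam s = (n i).lam s := by
  have hle : ∀ j, (n j).lam s ≤ (n i).lam s := fun j => by
    by_cases hj : s ∈ (n j).ct.L
    · exact (lam_eq_of_directed hn hj hi).le
    · exact ((n j).lam_dom s hj).trans_le zero_le
  exact le_antisymm (ciSup_le' hle) (le_ciSup ⟨_, forall_mem_range.2 hle⟩ i)

theorem iUnion_B_eq (hn : Directed NLE n) {i : ι} {s : τ} (hi : s ∈ (n i).ct.L) :
    ⋃ j, (n j).B s = (n i).B s :=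
  (iUnion_subset fun j _ hb => B_eq_of_directed hn ((n j).mem_L_of_mem_B hb) hi ▸ hb).antisymm
    (subset_iUnion (fun j => (n j).B s) i)

theorem iUnion_W_inter (hn : Directed NLE n) (i : ι) :
    (⋃ j, (n j).W) ∩ (n i).ct.L = (n i).W := by
  refine Subset.antisymm (fun s ⟨hsW, hsi⟩ => ?_) fun s hs =>
    ⟨mem_iUnion.2 ⟨i, hs⟩, (n i).W_sub hs⟩
  obtain ⟨j, hsj⟩ := mem_iUnion.1 hsW
  exact (mem_W_iff_of_directed hn hsi ((n j).W_sub hsj)).2 hsj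

theorem notMem_iUnion_W_of_notMem_W (hn : Directed NLE n) {i : ι} {s : τ}
    (hi : s ∈ (n i).ct.L) (hs : s ∉ (n i).W) : s ∉ ⋃ j, (n j).W :=
  fun h => hs (iUnion_W_inter hn i ▸ ⟨h, hi⟩)

theorem iUnion_B_eq_iUnion_A (hn : Directed NLE n) {s : τ} (hs : s ∈ ⋃ j, (n j).W) :
    ⋃ j, (n j).B s = ⋃ j, (n j).ct.A s :=
  iUnion_congr fun j => (n j).B_eq_A_of_notMem_diff fun ⟨hj, hsj⟩ =>
    notMem_iUnion_W_of_notMem_W hn hj hsj hs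

theorem iUnion_A_eq_of_mem_W (hn : Directed NLE n) {i : ι} {s : τ} (hi : s ∈ (n i).W) :
    ⋃ j, (n j).ct.A s = (n i).ct.A s := by
  rw [← iUnion_B_eq_iUnion_A hn (mem_iUnion.2 ⟨i, hi⟩), iUnion_B_eq hn ((n i).W_sub hi),
    (n i).B_eq_of_mem_W s hi]

theorem mem_diff_of_mem_iUnion_diff {i : ι} {t : τ}
    (ht : t ∈ (⋃ j, (n j).ct.L) \ ⋃ j, (n j).W) (hti : t ∈ (n i).ct.L) :
    t ∈ (n i).ct.L \ (n i).W :=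
  ⟨hti, fun h => ht.2 (mem_iUnion.2 ⟨i, h⟩)⟩

theorem iUnion_Idl_downward_closed (s : τ) :
    ∀ X ∈ ⋃ j, (n j).Idl s, ∀ Y ⊆ X, Y ∈ ⋃ j, (n j).Idl s := by
  intro X hX Y hYX
  obtain ⟨j, hXj⟩ := mem_iUnion.1 hX
  exact mem_iUnion.2 ⟨j, (n j).Idl_down s ((n j).mem_diff_of_mem_Idl hXj) X hXj Y hYX⟩

theorem subset_iUnion_B_of_mem_iUnion_Idl {s : τ} {X : Set (Set τ)}
    (hX : X ∈ ⋃ j, (n j).Idl s) : X ⊆ ⋃ j, (n j).B s := by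
  obtain ⟨j, hXj⟩ := mem_iUnion.1 hX
  exact ((n j).Idl_sub s ((n j).mem_diff_of_mem_Idl hXj) X hXj).trans
    (subset_iUnion (fun j => (n j).B s) j)

/-- The ideal at `s` is guarded by `s ∈ L \ W`: otherwise the closure would still contain `∅`. -/
noncomputable def iUnion (n : ι → NTemplate τ κ) (hn : Directed NLE n) (hκ : κ.IsRegular) :
    NTemplate τ κ where
  ct := CombTemplate.iUnion (fun i => (n i).ct) (directed_mle_ct hn)
  W := ⋃ i, (n i).W
  W_sub := iUnion_mono fun i => (n i).W_sub
  lam s := ⨆ j, (n j).lam s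
  B s := ⋃ j, (n j).B s
  Idl s := {X | s ∈ (⋃ j, (n j).ct.L) \ ⋃ j, (n j).W ∧
    X ∈ iUnionClosure κ (⋃ j, (n j).Idl s)}
  lam_pow t ht := by
    obtain ⟨i, hti⟩ := mem_iUnion.1 ht
    simp only [iSup_lam_eq hn hti, (n i).lam_pow t hti]
  lam_dom t ht := nonpos_iff_eq_zero.1 <| ciSup_le' fun j =>
    ((n j).lam_dom t fun h => ht (mem_iUnion.2 ⟨j, h⟩)).le
  B_dom t ht := iUnion_eq_empty.2 fun j => (n j).B_dom t fun h => ht (mem_iUnion.2 ⟨j, h⟩)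
  Idl_dom t ht := eq_empty_of_forall_notMem fun _ hX => ht hX.1
  B_eq_of_mem_W t ht := iUnion_B_eq_iUnion_A hn ht
  A_card_of_mem_W t ht := by
    obtain ⟨i, hti⟩ := mem_iUnion.1 ht
    change #(⋃ j, (n j).ct.A t) ≤ ⨆ j, (n j).lam t
    rw [iUnion_A_eq_of_mem_W hn hti, iSup_lam_eq hn ((n i).W_sub hti)]
    exact (n i).A_card_of_mem_W t hti
  A_elt_of_mem_W t ht a ha := by
    obtain ⟨i, hti⟩ := mem_iUnion.1 ht
    change a ∈ ⋃ j, (n j).ct.A t at ha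
    rw [iUnion_A_eq_of_mem_W hn hti] at ha
    obtain ⟨hcard, hW⟩ := (n i).A_elt_of_mem_W t hti a ha
    exact ⟨(iSup_lam_eq hn ((n i).W_sub hti)).symm ▸ hcard,
      hW.trans (subset_iUnion (fun j => (n j).W) i)⟩
  B_subA t ht b hb := by
    obtain ⟨i, hti⟩ := mem_iUnion.1 ht.1
    change b ∈ ⋃ j, (n j).B t at hb
    rw [iUnion_B_eq hn hti] at hb
    exact mem_iUnion.2 ⟨i, (n i).B_subA t (mem_diff_of_mem_iUnion_diff ht hti) hb⟩
  B_elt t ht b hb := by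
    obtain ⟨i, hti⟩ := mem_iUnion.1 ht.1
    change b ∈ ⋃ j, (n j).B t at hb
    rw [iUnion_B_eq hn hti] at hb
    obtain ⟨hW, hcard⟩ := (n i).B_elt t (mem_diff_of_mem_iUnion_diff ht hti) b hb
    exact ⟨hW.trans (subset_iUnion (fun j => (n j).W) i), (iSup_lam_eq hn hti).symm ▸ hcard⟩
  B_card t ht := by
    obtain ⟨i, hti⟩ := mem_iUnion.1 ht.1
    rw [iUnion_B_eq hn hti, iSup_lam_eq hn hti]
    exact (n i).B_card t (mem_diff_of_mem_iUnion_diff ht hti)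
  Idl_sub _ _ _ hX :=
    subset_of_mem_iUnionClosure (fun _ => subset_iUnion_B_of_mem_iUnion_Idl) hX.2
  Idl_down t _ _ hX Y hYX :=
    ⟨hX.1, mem_iUnionClosure_of_subset (iUnion_Idl_downward_closed t) hX.2 hYX⟩
  Idl_iUnion t ht _ _ hι hf := ⟨ht, iUnion_mem_iUnionClosure hκ hι fun i => (hf i).2⟩
  Idl_spec t ht a ha := by
    obtain ⟨j, haj⟩ := mem_iUnion.1 ha
    have htj : t ∈ (n j).ct.L := (n j).ct.mem_L_of_mem_A haj
    refine ⟨ht, subset_iUnionClosure (one_lt_aleph0.trans_le hκ.aleph0_le)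
      (mem_iUnion.2 ⟨j, ?_⟩)⟩
    rw [iUnion_B_eq hn htj]
    exact (n j).Idl_spec t (mem_diff_of_mem_iUnion_diff ht htj) a haj

variable (hn : Directed NLE n) (hκ : κ.IsRegular)

theorem iUnion_Idl_of_mem_diff {s : τ}
    (hs : s ∈ (iUnion n hn hκ).ct.L \ (iUnion n hn hκ).W) :
    (iUnion n hn hκ).Idl s = iUnionClosure κ (⋃ j, (n j).Idl s) :=
  ext fun _ => and_iff_right hs

theorem nle_iUnion (i : ι) : NLE (n i) (iUnion n hn hκ) := by
  refine ⟨CombTemplate.mle_iUnion (directed_mle_ct hn) i, (iUnion_W_inter hn i).symm,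
    fun s hs => ⟨(iSup_lam_eq hn hs).symm, (iUnion_B_eq hn hs).symm,
      subset_iUnion (fun j => (n j).ct.A s) i, fun X hX => ?_⟩⟩
  obtain ⟨hsi, hsW⟩ := (n i).mem_diff_of_mem_Idl hX
  exact ⟨⟨mem_iUnion.2 ⟨i, hsi⟩, notMem_iUnion_W_of_notMem_W hn hsi hsW⟩,
    subset_iUnionClosure (one_lt_aleph0.trans_le hκ.aleph0_le) (mem_iUnion.2 ⟨i, hX⟩)⟩

theorem iUnion_nle {n' : NTemplate τ κ} (h : ∀ i, NLE (n i) n') : NLE (iUnion n hn hκ) n' := by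
  refine ⟨CombTemplate.iUnion_mle (directed_mle_ct hn) fun i => (h i).1, ?_, fun s hs => ?_⟩
  · ext s
    refine ⟨fun hs => ?_, fun ⟨hs', hsL⟩ => ?_⟩
    · obtain ⟨i, hsi⟩ := mem_iUnion.1 hs
      exact ⟨((h i).mem_W_iff ((n i).W_sub hsi)).1 hsi, mem_iUnion.2 ⟨i, (n i).W_sub hsi⟩⟩
    · obtain ⟨i, hsi⟩ := mem_iUnion.1 hsL
      exact mem_iUnion.2 ⟨i, ((h i).mem_W_iff hsi).2 hs'⟩
  obtain ⟨i, hsi⟩ := mem_iUnion.1 hs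
  obtain ⟨hlam, hB, -, -⟩ := (h i).2.2 s hsi
  refine ⟨(iSup_lam_eq hn hsi).trans hlam, (iUnion_B_eq hn hsi).trans hB,
    iUnion_subset fun j => (h j).1.A_subset s, fun X ⟨⟨_, hsW⟩, hX⟩ => ?_⟩
  have hs' : s ∈ n'.ct.L \ n'.W :=
    ⟨(h i).1.1 hsi, fun h' => hsW (mem_iUnion.2 ⟨i, ((h i).mem_W_iff hsi).2 h'⟩)⟩
  exact iUnionClosure_subset (n'.Idl_iUnion s hs')
    (iUnion_subset fun j => (h j).Idl_subset s) hX

end NTemplate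

theorem NLE_increasing_lub_general {τ : Type u} {κ : Cardinal.{u}} (hκinf : ℵ₀ ≤ κ)
    (hκ : κ ^< κ = κ) (δ : Ordinal.{u})
    (n : Set.Iio δ → NTemplate τ κ)
    (hmono : ∀ i j : Set.Iio δ, (i : Ordinal.{u}) ≤ (j : Ordinal.{u}) → NLE (n i) (n j)) :
    ∃ nu : NTemplate τ κ,
      (nu.ct.L = ⋃ i : Set.Iio δ, (n i).ct.L) ∧
      (∀ s t : τ, nu.ct.lt s t ↔ ∃ i : Set.Iio δ, (n i).ct.lt s t) ∧
      (∀ i : Set.Iio δ, ∀ s ∈ (n i).ct.L,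
        nu.ct.A s = {a | ∃ j : Set.Iio δ, (i : Ordinal.{u}) ≤ (j : Ordinal.{u}) ∧
          a ∈ (n j).ct.A s}) ∧
      (nu.W = ⋃ i : Set.Iio δ, (n i).W) ∧
      (∀ i : Set.Iio δ, ∀ s ∈ (n i).ct.L,
        nu.lam s = (n i).lam s ∧ nu.B s = (n i).B s) ∧
      (∀ i : Set.Iio δ, ∀ s ∈ (n i).ct.L, s ∉ nu.W →
        nu.Idl s = {X | ∃ (ι : Type u) (f : ι → Set (Set τ)), #ι < κ ∧
          (∀ k : ι, ∃ j : Set.Iio δ, (i : Ordinal.{u}) ≤ (j : Ordinal.{u}) ∧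
            f k ∈ (n j).Idl s) ∧ X = ⋃ k, f k}) ∧
      (∀ i, NLE (n i) nu) ∧
      ∀ n' : NTemplate τ κ, (∀ i, NLE (n i) n') → NLE nu n' := by
  have hκreg := Cardinal.isRegular_of_powerlt_self_s15 hκinf hκ
  have hdir : Directed NLE n := directed_of_isDirected_le fun i j hij => hmono i j hij
  have hA_mono (s : τ) : Monotone fun j => (n j).ct.A s :=
    fun i j hij => (hmono i j hij).1.A_subset s
  have hIdl_mono (s : τ) : Monotone fun j => (n j).Idl s :=
    fun i j hij => (hmono i j hij).Idl_subset s
  refine ⟨NTemplate.iUnion n hdir hκreg, rfl, fun _ _ => Iff.rfl,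
    fun i s _ => (hA_mono s).iUnion_eq_setOf_exists_ge i, rfl,
    fun i s hs => ⟨NTemplate.iSup_lam_eq hdir hs, NTemplate.iUnion_B_eq hdir hs⟩,
    fun i s hs hsW => ?_, NTemplate.nle_iUnion hdir hκreg,
    fun _ => NTemplate.iUnion_nle hdir hκreg⟩
  rw [NTemplate.iUnion_Idl_of_mem_diff hdir hκreg ⟨mem_iUnion.2 ⟨i, hs⟩, hsW⟩,
    (hIdl_mono s).iUnion_eq_setOf_exists_ge i]
  rfl

/-- Assume `κ = κ^{<κ}` is an infinite cardinal.  If `δ` is a limit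
ordinal and `⟨n α : α < δ⟩` is a `≤_N`-increasing sequence in `N`, then it has a
`≤_N`-least upper bound `n`, determined by: `m_n = ⋃_{α<δ} m_{n α}`, `W_n = ⋃_{α<δ} W_{n α}`,
`λ` and `B` unchanged on each `L_{n α}`, and `I_{n,s}` (for `s ∈ L_{n α} \ W_n`) the closure
of `⋃_{β ∈ [α,δ)} I_{n β, s}` under unions of fewer than `κ` members. -/
theorem NLE_increasing_lub {τ : Type u} {κ : Cardinal.{u}} (hκinf : ℵ₀ ≤ κ)
    (hκ : κ ^< κ = κ) (δ : Ordinal.{u}) (hδ : Order.IsSuccLimit δ)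
    (n : Set.Iio δ → NTemplate τ κ)
    (hmono : ∀ i j : Set.Iio δ, (i : Ordinal.{u}) ≤ (j : Ordinal.{u}) → NLE (n i) (n j)) :
    ∃ nu : NTemplate τ κ,
      (nu.ct.L = ⋃ i : Set.Iio δ, (n i).ct.L) ∧
      (∀ s t : τ, nu.ct.lt s t ↔ ∃ i : Set.Iio δ, (n i).ct.lt s t) ∧
      (∀ i : Set.Iio δ, ∀ s ∈ (n i).ct.L,
        nu.ct.A s = {a | ∃ j : Set.Iio δ, (i : Ordinal.{u}) ≤ (j : Ordinal.{u}) ∧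
          a ∈ (n j).ct.A s}) ∧
      (nu.W = ⋃ i : Set.Iio δ, (n i).W) ∧
      (∀ i : Set.Iio δ, ∀ s ∈ (n i).ct.L,
        nu.lam s = (n i).lam s ∧ nu.B s = (n i).B s) ∧
      (∀ i : Set.Iio δ, ∀ s ∈ (n i).ct.L, s ∉ nu.W →
        nu.Idl s = {X | ∃ (ι : Type u) (f : ι → Set (Set τ)), #ι < κ ∧
          (∀ k : ι, ∃ j : Set.Iio δ, (i : Ordinal.{u}) ≤ (j : Ordinal.{u}) ∧
            f k ∈ (n j).Idl s) ∧ X = ⋃ k, f k}) ∧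
      (∀ i, NLE (n i) nu) ∧
      ∀ n' : NTemplate τ κ, (∀ i, NLE (n i) n') → NLE nu n' :=
  NLE_increasing_lub_general hκinf hκ δ n hmono
end

section
/- If κ is a weakly inaccessible cardinal (an uncountable regular limit cardinal) and the diamond principle ◊_κ holds, then there exists a κ-active sequence λ̄ = ⟨λ_η, λ_η⁰, D_η : η ∈ T⟩, i.e. a κ-candidate satisfying the κ-active conditions. -/
universe u

open Cardinal

/-- A sequence of ordinals `< κ` of length `< κ`, i.e. a member of `^{κ>}κ`.  The values
beyond the length are pinned to `0` so that the notion is extensional. -/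
structure KSeq (κ : Cardinal.{u}) : Type (u + 1) where
  len : Ordinal.{u}
  len_lt : len < κ.ord
  val : Ordinal.{u} → Ordinal.{u}
  val_lt : ∀ β, β < len → val β < κ.ord
  val_of_le : ∀ β, len ≤ β → val β = 0

namespace KSeq

variable {κ : Cardinal.{u}}

/-- The initial segment `η ↾ ε`. -/
noncomputable def restrict (η : KSeq κ) (ε : Ordinal.{u}) (h : ε ≤ η.len) : KSeq κ where
  len := ε
  len_lt := lt_of_le_of_lt h η.len_lt
  val β := if β < ε then η.val β else 0
  val_lt := by
    intro β hβ
    rw [if_pos hβ]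
    exact η.val_lt β (lt_of_lt_of_le hβ h)
  val_of_le := by intro β hβ; rw [if_neg (not_lt.mpr hβ)]

/-- `η` is a proper initial segment of `ν` (`η ⊲ ν`). -/
def slt (η ν : KSeq κ) : Prop :=
  η.len < ν.len ∧ ∀ β, β < η.len → η.val β = ν.val β

/-- `η` is an initial segment of `ν` (`η ⊴ ν`). -/
def sle (η ν : KSeq κ) : Prop :=
  η.len ≤ ν.len ∧ ∀ β, β < η.len → η.val β = ν.val β

end KSeq

/-- The restriction to `δ` of a full `κ`-branch `f : κ → κ`. -/
noncomputable def branchRestrict (κ : Cardinal.{u}) (f : Ordinal.{u} → Ordinal.{u})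
    (hf : ∀ β, f β < κ.ord) (δ : Ordinal.{u}) (h : δ < κ.ord) : KSeq κ where
  len := δ
  len_lt := h
  val β := if β < δ then f β else 0
  val_lt := by intro β hβ; rw [if_pos hβ]; exact hf β
  val_of_le := by intro β hβ; rw [if_neg (not_lt.mpr hβ)]

/-- `C` is a closed unbounded subset of `ρ`. -/
def IsClubIn (C : Set Ordinal.{u}) (ρ : Ordinal.{u}) : Prop :=
  (∀ γ ∈ C, γ < ρ) ∧
  (∀ β, β < ρ → ∃ γ ∈ C, β ≤ γ) ∧
  ∀ δ, δ < ρ → δ ≠ 0 → (∀ β, β < δ → ∃ γ ∈ C, β < γ ∧ γ < δ) → δ ∈ C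

/-- `S` is stationary in `ρ`: it meets every closed unbounded subset of `ρ`. -/
def IsStationaryIn (S : Set Ordinal.{u}) (ρ : Ordinal.{u}) : Prop :=
  ∀ C : Set Ordinal.{u}, IsClubIn C ρ → (S ∩ C).Nonempty

/-- The diamond principle `◊_κ`: there is a sequence `⟨A α ⊆ α : α < κ⟩` such that for
every `A ⊆ κ` the set `{α < κ : A ∩ α = A α}` is stationary in `κ`. -/
def DiamondKappa (κ : Cardinal.{u}) : Prop :=
  ∃ A : Ordinal.{u} → Set Ordinal.{u},
    (∀ α, A α ⊆ Set.Iio α) ∧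
    ∀ S : Set Ordinal.{u}, S ⊆ Set.Iio κ.ord →
      IsStationaryIn {α | α < κ.ord ∧ S ∩ Set.Iio α = A α} κ.ord

/-- `κ` is weakly inaccessible: an uncountable regular limit cardinal. -/
def IsWeaklyInaccessible (κ : Cardinal.{u}) : Prop :=
  ℵ₀ < κ ∧ κ.IsRegular ∧ ∀ μ : Cardinal.{u}, μ < κ → Order.succ μ < κ

/-- The tree `T` determined by the data `lam`, namely
`T = {η ∈ ^{κ>}κ : ∀ ε < lg η, η ε < λ_{η ↾ ε}}`. -/
def candTree (κ : Cardinal.{u}) (lam : KSeq κ → Cardinal.{u}) : Set (KSeq κ) :=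
  {η | ∀ (ε : Ordinal.{u}) (h : ε < η.len), η.val ε < (lam (η.restrict ε h.le)).ord}

/-- `D` is a `λ⁰`-complete filter on `λ`. -/
def IsCompleteFilterOn (lamv lam0 : Cardinal.{u}) (D : Set (Set Ordinal.{u})) : Prop :=
  (∀ X ∈ D, X ⊆ Set.Iio lamv.ord) ∧
  Set.Iio lamv.ord ∈ D ∧
  (∀ X ∈ D, ∀ Y : Set Ordinal.{u}, X ⊆ Y → Y ⊆ Set.Iio lamv.ord → Y ∈ D) ∧
  ∀ (ι : Type u), Nonempty ι → ∀ f : ι → Set Ordinal.{u}, #ι < lam0 →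
    (∀ i, f i ∈ D) → (⋂ i, f i) ∈ D

/-- `λ̄ = ⟨λ_η, λ⁰_η, D_η : η ∈ T⟩` is a `κ`-candidate. -/
def IsKappaCandidate (κ : Cardinal.{u}) (lam lam0 : KSeq κ → Cardinal.{u})
    (D : KSeq κ → Set (Set Ordinal.{u})) : Prop :=
  -- `T` contains the empty sequence and is closed under initial segments
  (∀ η : KSeq κ, η.len = 0 → η ∈ candTree κ lam) ∧
  (∀ η ∈ candTree κ lam, ∀ (ε : Ordinal.{u}) (h : ε ≤ η.len),
    η.restrict ε h ∈ candTree κ lam) ∧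
  -- `T` has no maximal node
  (∀ η ∈ candTree κ lam, ∃ ν ∈ candTree κ lam, KSeq.slt η ν) ∧
  -- `T` is closed under unions of `⊲`-increasing chains of length `< κ`
  (∀ γ : Ordinal.{u}, Order.IsSuccLimit γ → γ < κ.ord →
    ∀ c : Set.Iio γ → KSeq κ, (∀ i, c i ∈ candTree κ lam) →
      (∀ i j : Set.Iio γ, (i : Ordinal.{u}) < (j : Ordinal.{u}) → KSeq.slt (c i) (c j)) →
      ∀ η : KSeq κ, (∀ i, KSeq.sle (c i) η) →
        (∀ β, β < η.len → ∃ i, β < (c i).len) → η ∈ candTree κ lam) ∧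
  -- for each `η ∈ T`, either (A)_η or (B)_η holds
  ∀ η ∈ candTree κ lam,
    (lam η = 1 ∧ lam0 η = 1 ∧ D η = {{(0 : Ordinal.{u})}}) ∨
    ((lam0 η).IsRegular ∧ lam0 η ≤ lam η ∧ lam η < κ ∧
      IsCompleteFilterOn (lam η) (lam0 η) (D η))

/-- `λ̄` is `κ`-active. -/
def IsKappaActive (κ : Cardinal.{u}) (lam lam0 : KSeq κ → Cardinal.{u})
    (_D : KSeq κ → Set (Set Ordinal.{u})) : Prop :=
  -- condition (i): for every `κ`-branch through `T`, the set of levels `δ` where the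
  -- branch's restriction has `λ > 1` and is `λ`-minimal among the `λ ≠ 1` nodes of
  -- level `δ` is stationary
  (∀ (f : Ordinal.{u} → Ordinal.{u}) (hf : ∀ β, f β < κ.ord),
    (∀ (δ : Ordinal.{u}) (h : δ < κ.ord), branchRestrict κ f hf δ h ∈ candTree κ lam) →
    IsStationaryIn
      {δ | ∃ h : δ < κ.ord, 1 < lam (branchRestrict κ f hf δ h) ∧
        ∀ ν ∈ candTree κ lam, ν.len = δ → ν ≠ branchRestrict κ f hf δ h →
          (lam (branchRestrict κ f hf δ h) < lam ν ∨ lam ν = 1)} κ.ord) ∧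
  -- condition (ii)
  ∀ η ∈ candTree κ lam, ∀ ν ∈ candTree κ lam,
    η.len < ν.len → lam ν ≠ 1 → lam η < lam0 ν

/-!
Using a pairing `κ × κ → κ`, `◊_κ` yields guesses `g δ : δ → κ` such that every branch
`f : κ → κ` satisfies `f ↾ δ = g δ` for stationarily many `δ`.  Give the node `g δ` of level `δ`
the value `λ = λ⁰ = ℵ_(δ+1)` with the principal filter at `0`, and every other node `λ = 1`.
Then each level carries at most one node with `λ > 1`, so condition (i) holds at every `δ` where
`g δ` guesses the branch, and (ii) holds because `δ ↦ ℵ_(δ+1)` is increasing and, `κ` being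
weakly inaccessible, stays below `κ`.
-/

open Set

universe v

theorem Cardinal.IsRegular.iSup_Iio_lt_ord {κ : Cardinal.{u}} (hκ : κ.IsRegular) {x : Ordinal.{u}}
    (hx : x < κ.ord) {g : Ordinal.{u} → Ordinal.{u}} (hg : ∀ β < x, g β < κ.ord) :
    ⨆ β : Iio x, g β < κ.ord := by
  refine Ordinal.lift_iSup_lt_of_lt_cof ?_ fun β => hg β β.2
  rw [← Ordinal.lift_cof, hκ.cof_ord]
  simpa [Cardinal.lt_ord, ← Ordinal.lift_card] using hx

theorem Cardinal.IsRegular.iSup_Iio_lt {κ : Cardinal.{u}} (hκ : κ.IsRegular) {x : Ordinal.{u}}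
    (hx : x < κ.ord) {g : Ordinal.{u} → Cardinal.{u}} (hg : ∀ β < x, g β < κ) :
    ⨆ β : Iio x, g β < κ := by
  refine Cardinal.lift_iSup_lt_of_lt_cof_ord ?_ fun β => hg β β.2
  rw [← Cardinal.lift_ord, ← Ordinal.lift_cof, hκ.cof_ord]
  simpa [Cardinal.lt_ord, ← Ordinal.lift_card] using hx

theorem IsWeaklyInaccessible.aleph_lt {κ : Cardinal.{u}} (hκ : IsWeaklyInaccessible κ) :
    ∀ δ < κ.ord, ℵ_ δ < κ := by
  intro δ
  induction δ using Ordinal.limitRecOn with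
  | zero => exact fun _ => Cardinal.aleph_zero ▸ hκ.1
  | add_one δ ih =>
    intro hδ
    rw [← Cardinal.succ_aleph]
    exact hκ.2.2 _ (ih ((Order.lt_succ δ).trans hδ))
  | limit δ hδ ih =>
    intro hδκ
    rw [Cardinal.aleph_limit hδ]
    exact hκ.2.1.iSup_Iio_lt hδκ fun β hβ => ih β hβ (hβ.trans hδκ)

theorem Cardinal.one_lt_aleph (o : Ordinal.{u}) : 1 < ℵ_ o :=
  Cardinal.one_lt_aleph0.trans_le (Cardinal.aleph0_le_aleph o)

theorem Set.exists_mapsTo_injOn_of_mk_le {α β : Type v} [Nonempty β] {s : Set α} {t : Set β}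
    (h : #s ≤ #t) : ∃ f : α → β, MapsTo f s t ∧ InjOn f s := by
  classical
  obtain ⟨e⟩ := h
  refine ⟨fun a => if ha : a ∈ s then e ⟨a, ha⟩ else Classical.arbitrary β,
    fun a ha => by simp [ha], fun a ha b hb hab => ?_⟩
  simp only [ha, hb, dite_true] at hab
  exact congrArg Subtype.val (e.injective (Subtype.ext hab))

theorem exists_mapsTo_injOn_prod_Iio_ord {κ : Cardinal.{u}} (hκ : ℵ₀ ≤ κ) :
    ∃ p : Ordinal.{u} × Ordinal.{u} → Ordinal.{u},
      MapsTo p (Iio κ.ord ×ˢ Iio κ.ord) (Iio κ.ord) ∧ InjOn p (Iio κ.ord ×ˢ Iio κ.ord) := by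
  refine Set.exists_mapsTo_injOn_of_mk_le (le_of_eq ?_)
  rw [Cardinal.mk_setProd, Cardinal.mul_eq_self]
  simpa using hκ

section club

variable {κ : Cardinal.{u}} {C : Set Ordinal.{u}} {g : Ordinal.{u} → Ordinal.{u}}

theorem IsClubIn.exists_mem_gt_of_bound (hκ : κ.IsRegular) (hC : IsClubIn C κ.ord)
    (hg : ∀ β < κ.ord, g β < κ.ord) {x : Ordinal.{u}} (hx : x < κ.ord) :
    ∃ y ∈ C, x < y ∧ ∀ β < x, g β < y := by
  obtain ⟨y, hyC, hy⟩ := hC.2.1 _ <| (Cardinal.isSuccLimit_ord hκ.aleph0_le).succ_lt <|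
    max_lt hx (hκ.iSup_Iio_lt_ord hx fun β hβ => hg β (hβ.trans hx))
  refine ⟨y, hyC, (le_max_left _ _).trans_lt ((Order.lt_succ _).trans_le hy),
    fun β hβ => lt_of_le_of_lt ?_ ((Order.lt_succ _).trans_le hy)⟩
  exact (Ordinal.le_iSup (fun β : Iio x => g β) ⟨β, hβ⟩).trans (le_max_right _ _)

theorem IsClubIn.exists_mem_closurePoint_ge (hκ : κ.IsRegular) (hκ₀ : ℵ₀ < κ)
    (hC : IsClubIn C κ.ord) (hg : ∀ β < κ.ord, g β < κ.ord) {x : Ordinal.{u}} (hx : x < κ.ord) :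
    ∃ δ ∈ C, (∀ β < δ, g β < δ) ∧ x ≤ δ := by
  choose! next hnextC hnext_gt hnext_bound using fun y (hy : y < κ.ord) =>
    hC.exists_mem_gt_of_bound hκ hg hy
  have hiter : ∀ n, next^[n] x < κ.ord := by
    intro n
    induction n with
    | zero => exact hx
    | succ n ih => rw [Function.iterate_succ_apply']; exact hC.1 _ (hnextC _ ih)
  have hstep : ∀ n, next^[n + 1] x = next (next^[n] x) := fun n => Function.iterate_succ_apply' ..
  have hmono : ∀ n, next^[n] x < next^[n + 1] x := fun n => hstep n ▸ hnext_gt _ (hiter n)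
  -- the least fixed point of `next` above `x` is a limit of elements of `C`
  refine ⟨Ordinal.nfp next x, hC.2.2 _ ?_ ?_ fun β hβ => ?_, fun β hβ => ?_, Ordinal.le_nfp _ _⟩
  · exact Cardinal.nfp_lt_ord_of_isRegular hκ hκ₀.ne' (fun y hy => hC.1 _ (hnextC y hy)) hx
  · exact ((hmono 0).trans_le (Ordinal.iterate_le_nfp next x 1)).ne_bot
  · obtain ⟨n, hn⟩ := Ordinal.lt_nfp_iff.mp hβ
    exact ⟨next^[n + 1] x, hstep n ▸ hnextC _ (hiter n), hn.trans (hmono n),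
      (hmono (n + 1)).trans_le (Ordinal.iterate_le_nfp next x _)⟩
  · obtain ⟨n, hn⟩ := Ordinal.lt_nfp_iff.mp hβ
    exact (hstep n ▸ hnext_bound _ (hiter n) β hn).trans_le (Ordinal.iterate_le_nfp next x _)

theorem IsClubIn.inter_closurePoints (hκ : κ.IsRegular) (hκ₀ : ℵ₀ < κ) (hC : IsClubIn C κ.ord)
    (hg : ∀ β < κ.ord, g β < κ.ord) : IsClubIn (C ∩ {δ | ∀ β < δ, g β < δ}) κ.ord := by
  refine ⟨fun γ hγ => hC.1 γ hγ.1, fun x hx => ?_, fun δ hδ hδ0 hacc => ?_⟩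
  · obtain ⟨δ, hδC, hδ, hxδ⟩ := hC.exists_mem_closurePoint_ge hκ hκ₀ hg hx
    exact ⟨δ, ⟨hδC, hδ⟩, hxδ⟩
  refine ⟨hC.2.2 δ hδ hδ0 fun β hβ => ?_, fun β hβ => ?_⟩
  · obtain ⟨γ, hγ, hβγ, hγδ⟩ := hacc β hβ
    exact ⟨γ, hγ.1, hβγ, hγδ⟩
  · obtain ⟨γ, hγ, hβγ, hγδ⟩ := hacc β hβ
    exact (hγ.2 β hβγ).trans hγδ

end club

theorem IsStationaryIn.mono {S S' : Set Ordinal.{u}} {ρ : Ordinal.{u}} (hS : IsStationaryIn S ρ)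
    (h : S ⊆ S') : IsStationaryIn S' ρ :=
  fun C hC => (hS C hC).mono (inter_subset_inter_left C h)

/-- The functional form of `◊_κ`. -/
def GuessesBranches (κ : Cardinal.{u}) (g : Ordinal.{u} → Ordinal.{u} → Ordinal.{u}) : Prop :=
  ∀ f : Ordinal.{u} → Ordinal.{u}, (∀ β, f β < κ.ord) →
    IsStationaryIn {δ | δ < κ.ord ∧ ∀ β < δ, g δ β = f β} κ.ord

theorem DiamondKappa.exists_guessesBranches {κ : Cardinal.{u}} (hκ : κ.IsRegular) (hκ₀ : ℵ₀ < κ)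
    (hdiamond : DiamondKappa κ) : ∃ g, GuessesBranches κ g := by
  classical
  obtain ⟨A, -, hA⟩ := hdiamond
  obtain ⟨p, hp, hpinj⟩ := exists_mapsTo_injOn_prod_Iio_ord hκ₀.le
  -- `A δ` is read as the graph of a partial function `δ → κ`, coded through `p`
  let g δ β := if h : ∃ γ < κ.ord, p (β, γ) ∈ A δ then h.choose else 0
  refine ⟨g, fun f hf C hC => ?_⟩
  have hpf : ∀ β < κ.ord, p (β, f β) < κ.ord := fun β hβ => hp ⟨hβ, hf β⟩
  let graph := (fun β => p (β, f β)) '' Iio κ.ord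
  obtain ⟨δ, ⟨hδ, hgraph⟩, hδC, hδcl⟩ := hA graph (image_subset_iff.mpr hpf) _
    (hC.inter_closurePoints hκ hκ₀ hpf)
  refine ⟨δ, ⟨hδ, fun β hβ => ?_⟩, hδC⟩
  have hex : ∃ γ < κ.ord, p (β, γ) ∈ A δ :=
    ⟨f β, hf β, hgraph ▸ ⟨⟨β, hβ.trans hδ, rfl⟩, hδcl β hβ⟩⟩
  obtain ⟨hγ, hγA⟩ := hex.choose_spec
  obtain ⟨⟨β', hβ', heq⟩, -⟩ : p (β, hex.choose) ∈ graph ∩ Iio δ := by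
    rwa [hgraph]
  have hpair : (β', f β') = (β, hex.choose) :=
    hpinj (mk_mem_prod hβ' (hf β')) (mk_mem_prod (hβ.trans hδ) hγ) heq
  obtain ⟨rfl, hfβ⟩ := Prod.ext_iff.mp hpair
  simp only [g, dif_pos hex]
  exact hfβ.symm

namespace KSeq

variable {κ : Cardinal.{u}}

theorem ext {η ν : KSeq κ} (hlen : η.len = ν.len) (hval : η.val = ν.val) : η = ν := by
  cases η; cases ν; cases hlen; cases hval; rfl

theorem restrict_congr {η ν : KSeq κ} {ε : Ordinal.{u}} (hη : ε ≤ η.len) (hν : ε ≤ ν.len)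
    (hval : ∀ β < ε, η.val β = ν.val β) : η.restrict ε hη = ν.restrict ε hν :=
  ext rfl <| funext fun β => by
    by_cases hβ : β < ε <;> simp [restrict, hβ, hval]

theorem restrict_restrict (η : KSeq κ) {ε ε' : Ordinal.{u}} (h : ε ≤ η.len) (h' : ε' ≤ ε) :
    (η.restrict ε h).restrict ε' h' = η.restrict ε' (h'.trans h) :=
  ext rfl <| funext fun β => by
    by_cases hβ : β < ε'
    · simp [restrict, hβ, hβ.trans_le h']
    · simp [restrict, hβ]

theorem restrict_len_self (η : KSeq κ) : η.restrict η.len le_rfl = η :=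
  ext rfl <| funext fun β => by
    by_cases hβ : β < η.len
    · simp [restrict, hβ]
    · simp [restrict, hβ, η.val_of_le β (not_lt.mp hβ)]

end KSeq

section candTree

variable {κ : Cardinal.{u}} {lam : KSeq κ → Cardinal.{u}}

theorem mem_candTree_of_len_eq_zero {η : KSeq κ} (h : η.len = 0) : η ∈ candTree κ lam :=
  fun _ hε => absurd (h ▸ hε) not_lt_zero

theorem KSeq.restrict_mem_candTree {η : KSeq κ} (hη : η ∈ candTree κ lam) {ε : Ordinal.{u}}
    (h : ε ≤ η.len) : η.restrict ε h ∈ candTree κ lam := by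
  intro ε' hε'
  have hε'ε : ε' < ε := hε'
  rw [η.restrict_restrict h hε'ε.le]
  simpa [KSeq.restrict, hε'ε] using hη ε' (hε'ε.trans_le h)

theorem mem_candTree_of_forall_lt {η : KSeq κ}
    (h : ∀ ε < η.len, ∃ ν ∈ candTree κ lam, ε < ν.len ∧ ∀ β ≤ ε, ν.val β = η.val β) :
    η ∈ candTree κ lam := by
  intro ε hε
  obtain ⟨ν, hν, hεν, hval⟩ := h ε hε
  rw [← hval ε le_rfl, ← KSeq.restrict_congr hεν.le hε.le fun β hβ => hval β hβ.le]
  exact hν ε hεν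

noncomputable def KSeq.extendZero (η : KSeq κ) (hκ : ℵ₀ ≤ κ) : KSeq κ where
  len := Order.succ η.len
  len_lt := (Cardinal.isSuccLimit_ord hκ).succ_lt η.len_lt
  val := η.val
  val_lt β hβ := by
    rcases (Order.lt_succ_iff.mp hβ).lt_or_eq with hlt | heq
    · exact η.val_lt β hlt
    · rw [η.val_of_le β heq.ge]
      exact (Cardinal.isSuccLimit_ord hκ).bot_lt
  val_of_le β hβ := η.val_of_le β ((Order.le_succ _).trans hβ)

theorem exists_slt_mem_candTree (hκ : ℵ₀ ≤ κ) {η : KSeq κ} (hη : η ∈ candTree κ lam)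
    (hη0 : lam η ≠ 0) : ∃ ν ∈ candTree κ lam, η.slt ν := by
  refine ⟨η.extendZero hκ, fun ε hε => ?_, Order.lt_succ _, fun _ _ => rfl⟩
  have hεη : ε ≤ η.len := Order.lt_succ_iff.mp hε
  rw [KSeq.restrict_congr hε.le hεη fun _ _ => rfl]
  rcases hεη.lt_or_eq with hlt | rfl
  · exact hη ε hlt
  · rw [η.restrict_len_self]
    change η.val η.len < _
    rw [η.val_of_le _ le_rfl, Cardinal.ord_pos]
    exact pos_iff_ne_zero.mpr hη0

end candTree

def principalZero (μ : Cardinal.{u}) : Set (Set Ordinal.{u}) :=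
  {X | X ⊆ Iio μ.ord ∧ 0 ∈ X}

theorem isCompleteFilterOn_principalZero {μ : Cardinal.{u}} (hμ : μ ≠ 0) (μ₀ : Cardinal.{u}) :
    IsCompleteFilterOn μ μ₀ (principalZero μ) := by
  refine ⟨fun X hX => hX.1, ⟨subset_rfl, ?_⟩, fun X hX Y hXY hY => ⟨hY, hXY hX.2⟩,
    fun ι _ f _ hf => ⟨?_, mem_iInter.mpr fun i => (hf i).2⟩⟩
  · rwa [mem_Iio, Cardinal.ord_pos, pos_iff_ne_zero]
  · exact (iInter_subset f (Classical.arbitrary ι)).trans (hf _).1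

theorem principalZero_one : principalZero 1 = {{(0 : Ordinal.{u})}} := by
  ext X
  simp only [principalZero, Cardinal.ord_one, mem_ofPred_eq, mem_singleton_iff]
  constructor
  · rintro ⟨hX, h0⟩
    exact Subset.antisymm (fun x hx => Order.lt_one_iff.mp (hX hx)) (singleton_subset_iff.mpr h0)
  · rintro rfl
    simp

theorem isKappaCandidate_of_dichotomy {κ : Cardinal.{u}} (hκ : ℵ₀ ≤ κ)
    {lam lam0 : KSeq κ → Cardinal.{u}} {D : KSeq κ → Set (Set Ordinal.{u})}
    (h : ∀ η ∈ candTree κ lam,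
      (lam η = 1 ∧ lam0 η = 1 ∧ D η = {{(0 : Ordinal.{u})}}) ∨
      ((lam0 η).IsRegular ∧ lam0 η ≤ lam η ∧ lam η < κ ∧
        IsCompleteFilterOn (lam η) (lam0 η) (D η))) :
    IsKappaCandidate κ lam lam0 D := by
  refine ⟨fun _ => mem_candTree_of_len_eq_zero, fun η hη ε h => η.restrict_mem_candTree hη h,
    fun η hη => exists_slt_mem_candTree hκ hη ?_, ?_, h⟩
  · rcases h η hη with ⟨h1, -⟩ | ⟨hreg, hle, -⟩
    · exact h1 ▸ one_ne_zero
    · exact (Cardinal.aleph0_pos.trans_le (hreg.aleph0_le.trans hle)).ne'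
  · intro γ _ _ c hc _ η hcη hcov
    refine mem_candTree_of_forall_lt fun ε hε => ?_
    obtain ⟨i, hi⟩ := hcov ε hε
    exact ⟨c i, hc i, hi, fun β hβ => (hcη i).2 β (hβ.trans_lt hi)⟩

section guess

variable {κ : Cardinal.{u}} {g : Ordinal.{u} → Ordinal.{u} → Ordinal.{u}}

def KSeq.IsGuessedBy (g : Ordinal.{u} → Ordinal.{u} → Ordinal.{u}) (η : KSeq κ) : Prop :=
  ∀ β < η.len, η.val β = g η.len β

theorem KSeq.IsGuessedBy.eq_of_len_eq {η ν : KSeq κ} (hη : η.IsGuessedBy g) (hν : ν.IsGuessedBy g)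
    (hlen : η.len = ν.len) : η = ν := by
  refine KSeq.ext hlen (funext fun β => ?_)
  by_cases hβ : β < η.len
  · rw [hη β hβ, hν β (hlen ▸ hβ), hlen]
  · rw [η.val_of_le β (not_lt.mp hβ), ν.val_of_le β (hlen ▸ not_lt.mp hβ)]

theorem isGuessedBy_branchRestrict {f : Ordinal.{u} → Ordinal.{u}} (hf : ∀ β, f β < κ.ord)
    {δ : Ordinal.{u}} (hδ : δ < κ.ord) (hguess : ∀ β < δ, g δ β = f β) :
    (branchRestrict κ f hf δ hδ).IsGuessedBy g := fun β (hβ : β < δ) => by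
  simp [branchRestrict, hβ, hguess β hβ]

open Classical in
noncomputable def guessLam (g : Ordinal.{u} → Ordinal.{u} → Ordinal.{u}) (η : KSeq κ) :
    Cardinal.{u} :=
  if η.IsGuessedBy g then ℵ_ (η.len + 1) else 1

theorem guessLam_of_isGuessedBy {η : KSeq κ} (h : η.IsGuessedBy g) :
    guessLam g η = ℵ_ (η.len + 1) :=
  if_pos h

theorem guessLam_of_not_isGuessedBy {η : KSeq κ} (h : ¬η.IsGuessedBy g) : guessLam g η = 1 :=
  if_neg h

theorem guessLam_le (η : KSeq κ) : guessLam g η ≤ ℵ_ (η.len + 1) := by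
  unfold guessLam
  split_ifs
  exacts [le_rfl, (Cardinal.one_lt_aleph _).le]

theorem guessLam_dichotomy (hκ : IsWeaklyInaccessible κ) (η : KSeq κ) :
    (guessLam g η = 1 ∧ guessLam g η = 1 ∧ principalZero (guessLam g η) = {{(0 : Ordinal.{u})}}) ∨
    ((guessLam g η).IsRegular ∧ guessLam g η ≤ guessLam g η ∧ guessLam g η < κ ∧
      IsCompleteFilterOn (guessLam g η) (guessLam g η) (principalZero (guessLam g η))) := by
  by_cases hη : η.IsGuessedBy g
  · rw [guessLam_of_isGuessedBy hη]
    have hlt : η.len + 1 < κ.ord := (Cardinal.isSuccLimit_ord hκ.2.1.aleph0_le).add_one_lt η.len_lt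
    exact Or.inr ⟨Cardinal.isRegular_aleph_add_one _, le_rfl, hκ.aleph_lt _ hlt,
      isCompleteFilterOn_principalZero (Cardinal.aleph_pos _).ne' _⟩
  · rw [guessLam_of_not_isGuessedBy hη, principalZero_one]
    exact Or.inl ⟨rfl, rfl, rfl⟩

theorem isKappaCandidate_guessLam (hκ : IsWeaklyInaccessible κ)
    (g : Ordinal.{u} → Ordinal.{u} → Ordinal.{u}) :
    IsKappaCandidate κ (guessLam g) (guessLam g) (fun η => principalZero (guessLam g η)) :=
  isKappaCandidate_of_dichotomy hκ.1.le fun η _ => guessLam_dichotomy hκ η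

theorem isKappaActive_guessLam (hg : GuessesBranches κ g) (D : KSeq κ → Set (Set Ordinal.{u})) :
    IsKappaActive κ (guessLam g) (guessLam g) D := by
  refine ⟨fun f hf _ => (hg f hf).mono fun δ ⟨hδ, hguess⟩ => ?_, fun η _ ν _ hlen hν1 => ?_⟩
  · have hη := isGuessedBy_branchRestrict hf hδ hguess
    refine ⟨hδ, guessLam_of_isGuessedBy hη ▸ Cardinal.one_lt_aleph _, fun ν _ hlen hne => Or.inr ?_⟩
    exact guessLam_of_not_isGuessedBy fun hν => hne (hν.eq_of_len_eq hη hlen)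
  · have hν : ν.IsGuessedBy g := of_not_not fun h => hν1 (guessLam_of_not_isGuessedBy h)
    rw [guessLam_of_isGuessedBy hν]
    exact (guessLam_le η).trans_lt (Cardinal.aleph_lt_aleph.mpr (by simpa using hlen))

end guess

/-- If `κ` is weakly inaccessible and the diamond principle `◊_κ` holds,
then there exists a `κ`-active `λ̄ = ⟨λ_η, λ⁰_η, D_η : η ∈ T⟩`, i.e. a `κ`-candidate
satisfying the `κ`-active conditions. -/
theorem exists_kappa_active (κ : Cardinal.{u}) (hκ : IsWeaklyInaccessible κ)
    (hdiamond : DiamondKappa κ) :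
    ∃ (lam lam0 : KSeq κ → Cardinal.{u}) (D : KSeq κ → Set (Set Ordinal.{u})),
      IsKappaCandidate κ lam lam0 D ∧ IsKappaActive κ lam lam0 D := by
  obtain ⟨g, hg⟩ := hdiamond.exists_guessesBranches hκ.2.1 hκ.1
  exact ⟨_, _, _, isKappaCandidate_guessLam hκ g, isKappaActive_guessLam hg _⟩
end
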